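/- arXiv:math/0701232 — 3 statements merged into one kernel-verified Lean document; each statement's English description precedes it below -/
import Mathlib

section
/- Let n be a positive integer such that S = lspec(n) is balanced. If q is a non-excessive prime of S dividing some element of E(S), then q > p^(μ_p) for every prime p other than q, where μ_p = v_p(max S₁). -/
/-- The length spectrum of `n`: the set of lengths `l` of decompositions of `n`,
i.e. sequences `a, a+1, ..., a+(l-1)` of `l ≥ 1` consecutive positive integers summing to `n`. -/
def lspec (n : ℕ) : Set ℕ :=
  {l | 0 < l ∧ ∃ a : ℕ, 0 < a ∧ ∑ i ∈ Finset.range l, (a + i) = n}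

/-- `A₀`: the even elements of `A`. -/
def evens (A : Set ℕ) : Set ℕ := {x ∈ A | Even x}

/-- `A₁`: the odd elements of `A`. -/
def odds (A : Set ℕ) : Set ℕ := {x ∈ A | Odd x}

/-- The spectral class of `n`: positive integers with the same length spectrum as `n`. -/
def specClass (n : ℕ) : Set ℕ := {m | 0 < m ∧ lspec m = lspec n}

/-- A set is balanced if it has equally many even and odd elements. -/
def balancedSet (S : Set ℕ) : Prop := (evens S).encard = (odds S).encard

/-- A set is unmixed if it has no even elements. -/
def unmixedSet (S : Set ℕ) : Prop := evens S = ∅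

/-- A set is lopsided if it is neither balanced nor unmixed. -/
def lopsidedSet (S : Set ℕ) : Prop := ¬ balancedSet S ∧ ¬ unmixedSet S

/-- The set of ratios `m'/m` over pairs of complementary factors `m ≤ m'` of `k`;
`q(k)` is the least element of this set. -/
def qSet (k : ℕ) : Set ℚ :=
  {r | ∃ m m' : ℕ, 0 < m ∧ m ≤ m' ∧ m * m' = k ∧ r = (m' : ℚ) / (m : ℚ)}

/-- The exceptional set `E(S)`: numbers `a = b·c` with `b, c ∈ S₁`, `a > max S₀`, and
whose set of divisors of `(max S₁)·a` strictly below `a` is exactly `S₁`. -/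
def excSet (S : Set ℕ) : Set ℕ :=
  {a | (∃ b ∈ odds S, ∃ c ∈ odds S, a = b * c) ∧ sSup (evens S) < a ∧
    {d | d ∣ sSup (odds S) * a ∧ d < a} = odds S}

/-- `P(S)`: the primes strictly greater than `max S₀`. -/
def primesAbove (S : Set ℕ) : Set ℕ := {p | p.Prime ∧ sSup (evens S) < p}

/-- A balanced spectrum is non-excessive if `S₁` is exactly the set of divisors of `max S₁`. -/
def nonExcessive (S : Set ℕ) : Prop := odds S = {d | d ∣ sSup (odds S)}

/-- `γ_p`: the largest `k` with `p^k ∈ S₁`. -/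
noncomputable def gammaIdx (S : Set ℕ) (p : ℕ) : ℕ := sSup {k | p ^ k ∈ odds S}

/-- `μ_p = v_p(max S₁)`. -/
noncomputable def muIdx (S : Set ℕ) (p : ℕ) : ℕ := (sSup (odds S)).factorization p

/-- The excessive index `ε_p = γ_p − μ_p` of a prime `p` with respect to `S`. -/
noncomputable def excIdx (S : Set ℕ) (p : ℕ) : ℕ := gammaIdx S p - muIdx S p

/-- The difference set `D(S)`: `S₁` with its `|S₀|` smallest elements removed when
`|S₀| ≤ |S₁|`, and empty otherwise.  An element `x` of `S₁` survives exactly when at least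
`|S₀|` elements of `S₁` lie strictly below it. -/
def diffSet (S : Set ℕ) : Set ℕ :=
  {x ∈ odds S | (evens S).encard ≤ {y ∈ odds S | y < x}.encard}
/-- If a non-excessive prime `q` of a balanced spectrum `S = lspec n` divides some element
of `E(S)`, then `q > p^(μ_p)` for every prime `p ≠ q`. -/
theorem nonexcessive_prime_large (n q : ℕ) (hn : 0 < n) (hb : balancedSet (lspec n))
    (hq : q.Prime) (hqne : excIdx (lspec n) q = 0)
    (hdvd : ∃ a ∈ excSet (lspec n), q ∣ a) :
    ∀ p : ℕ, p.Prime → p ≠ q → p ^ muIdx (lspec n) p < q := by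
  obtain ⟨a, ⟨⟨b, hbS, c, hcS, habc⟩, hm0, hT⟩, hqa⟩ := hdvd
  intro p hp hpq
  set S := lspec n with hSdef
  set m₁ := sSup (odds S) with hm₁def
  -- the spectrum is bounded by n
  have hSsub : S ⊆ Set.Iic n := by
    rintro l ⟨hl, x, hx, hsum⟩
    simp only [Set.mem_Iic]
    calc l = ∑ _i ∈ Finset.range l, 1 := by simp
    _ ≤ ∑ i ∈ Finset.range l, (x + i) := Finset.sum_le_sum (fun i _ => by omega)
    _ = n := hsum
  have hOsub : odds S ⊆ Set.Iic n := fun x hx => hSsub hx.1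
  have hfin : (odds S).Finite := (Set.finite_Iic n).subset hOsub
  have hbdd : BddAbove (odds S) := hfin.bddAbove
  have hne : (odds S).Nonempty := ⟨b, hbS⟩
  have hm₁mem : m₁ ∈ odds S := Nat.sSup_mem hne hbdd
  have hm₁pos : 0 < m₁ := hm₁mem.1.1
  have hm₁lt : m₁ < a := by
    rw [← hT] at hm₁mem
    exact hm₁mem.2
  -- q^(μ_q)·q divides m₁·a
  have hqdvd : q ^ (muIdx S q) * q ∣ m₁ * a :=
    mul_dvd_mul (Nat.ordProj_dvd m₁ q) hqa
  -- the exponent set for γ_q is bounded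
  have hKbdd : BddAbove {k | q ^ k ∈ odds S} := by
    refine ⟨n, fun k hk => ?_⟩
    have h1 : q ^ k ≤ n := hOsub hk
    have h2 : k < q ^ k := Nat.lt_pow_self hq.one_lt
    omega
  have hγμ : gammaIdx S q ≤ muIdx S q := Nat.sub_eq_zero_iff_le.mp hqne
  have hale : a ≤ q ^ (muIdx S q + 1) := by
    by_contra h
    push_neg at h
    have hmem : q ^ (muIdx S q + 1) ∈ odds S := by
      rw [← hT]
      exact ⟨by rw [pow_succ]; exact hqdvd, h⟩
    have hγ : muIdx S q + 1 ≤ gammaIdx S q := le_csSup hKbdd hmem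
    omega
  have hcop : Nat.Coprime (p ^ muIdx S p) (q ^ muIdx S q) :=
    Nat.Coprime.pow _ _ ((Nat.coprime_primes hp hq).mpr hpq)
  have hdvdm : p ^ muIdx S p * q ^ muIdx S q ∣ m₁ :=
    hcop.mul_dvd_of_dvd_of_dvd (Nat.ordProj_dvd m₁ p) (Nat.ordProj_dvd m₁ q)
  have hlem : p ^ muIdx S p * q ^ muIdx S q ≤ m₁ := Nat.le_of_dvd hm₁pos hdvdm
  have hfin' : p ^ muIdx S p * q ^ muIdx S q < q * q ^ muIdx S q := by
    have := hale
    rw [pow_succ] at this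
    calc p ^ muIdx S p * q ^ muIdx S q ≤ m₁ := hlem
    _ < a := hm₁lt
    _ ≤ q ^ muIdx S q * q := this
    _ = q * q ^ muIdx S q := mul_comm _ _
  exact Nat.lt_of_mul_lt_mul_right hfin'
end

section
/- Let n be a positive integer such that S = lspec(n) is balanced. Then S is non-excessive if and only if E(S) is empty or E(S) = {q^(μ_q+1)} for some prime q, where μ_q = v_q(max S₁). In particular, if S is non-excessive then |E(S)| ≤ 1. -/
lemma mem_lspec {n l : ℕ} : l ∈ lspec n ↔ 0 < l ∧ ∃ a : ℕ, 0 < a ∧ l * (2 * a + l - 1) = 2 * n := by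
  unfold lspec
  simp only [Set.mem_setOf_eq]
  refine and_congr_right fun hl => exists_congr fun a => and_congr_right fun ha => ?_
  have hsum : (∑ i ∈ Finset.range l, (a + i)) * 2 = l * (2 * a + l - 1) := by
    obtain ⟨k, rfl⟩ : ∃ k, l = k + 1 := ⟨l - 1, by omega⟩
    have h2 : 2 * a + (k + 1) - 1 = 2 * a + k := by omega
    rw [Finset.sum_add_distrib, Finset.sum_const, Finset.card_range, smul_eq_mul, h2]
    have hE := Finset.sum_range_id_mul_two (k + 1)
    rw [Nat.add_sub_cancel] at hE
    nlinarith [hE]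
  constructor
  · intro h; rw [← hsum, h]; ring
  · intro h
    have : (∑ i ∈ Finset.range l, (a + i)) * 2 = n * 2 := by rw [hsum, h]; ring
    omega

lemma mem_odds_lspec {α m x : ℕ} (hm : ¬ 2 ∣ m) (hm0 : 0 < m) :
    x ∈ odds (lspec (2 ^ α * m)) ↔ x ∣ m ∧ x * (x + 1) ≤ 2 * (2 ^ α * m) := by
  constructor
  · rintro ⟨hx, hodd⟩
    rw [mem_lspec] at hx
    obtain ⟨hx0, a, ha, heq⟩ := hx
    have hxodd : ¬ 2 ∣ x := by rw [Nat.odd_iff] at hodd; omega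
    have hco : Nat.Coprime x (2 ^ (α + 1)) :=
      (((Nat.prime_two.coprime_iff_not_dvd).mpr hxodd).symm).pow_right _
    have hdvd2 : x ∣ m * 2 ^ (α + 1) := ⟨2 * a + x - 1, by rw [show m * 2 ^ (α + 1) = 2 * (2 ^ α * m) by ring, ← heq]⟩
    have hdvd : x ∣ m := hco.dvd_of_dvd_mul_right hdvd2
    refine ⟨hdvd, ?_⟩
    calc x * (x + 1) ≤ x * (2 * a + x - 1) := Nat.mul_le_mul_left x (by omega)
    _ = 2 * (2 ^ α * m) := heq
  · rintro ⟨hdvd, hle⟩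
    obtain ⟨y, hy⟩ := hdvd
    have hx0 : 0 < x := by
      rcases Nat.eq_zero_or_pos x with h | h
      · subst h; simp at hy; omega
      · exact h
    have hxodd : ¬ 2 ∣ x := fun ⟨c, hc⟩ => hm ⟨c * y, by rw [hy, hc]; ring⟩
    have hy0 : 0 < y := by
      rcases Nat.eq_zero_or_pos y with h | h
      · subst h; simp at hy; omega
      · exact h
    have hle' : x + 1 ≤ 2 * 2 ^ α * y := by
      have h2 : x * (x + 1) ≤ x * (2 * 2 ^ α * y) := by
        calc x * (x + 1) ≤ 2 * (2 ^ α * m) := hle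
        _ = x * (2 * 2 ^ α * y) := by rw [hy]; ring
      exact Nat.le_of_mul_le_mul_left h2 hx0
    set t := 2 * 2 ^ α * y with ht
    have hteven : 2 ∣ t := ⟨2 ^ α * y, by ring⟩
    obtain ⟨a, ha, hta⟩ : ∃ a, 0 < a ∧ 2 * a = t - x + 1 := ⟨(t - x + 1) / 2, by omega⟩
    constructor
    · rw [mem_lspec]
      exact ⟨hx0, a, ha, by rw [show 2 * a + x - 1 = t by omega, ht, hy]; ring⟩
    · rw [Nat.odd_iff]; omega

lemma mem_evens_lspec {α m x : ℕ} (hm : ¬ 2 ∣ m) (hm0 : 0 < m) :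
    x ∈ evens (lspec (2 ^ α * m)) ↔
      ∃ e, e ∣ m ∧ 2 ^ (α + 1) * e ^ 2 < m ∧ x = 2 ^ (α + 1) * e := by
  constructor
  · rintro ⟨hx, heven⟩
    rw [mem_lspec] at hx
    obtain ⟨hx0, a, ha, heq⟩ := hx
    have hxe : 2 ∣ x := heven.two_dvd
    set d := 2 * a + x - 1 with hd
    have hdodd : ¬ 2 ∣ d := by omega
    have hco : Nat.Coprime d (2 ^ (α + 1)) :=
      (((Nat.prime_two.coprime_iff_not_dvd).mpr hdodd).symm).pow_right _
    have hdvd2 : d ∣ m * 2 ^ (α + 1) := ⟨x, by rw [show m * 2 ^ (α + 1) = 2 * (2 ^ α * m) by ring, ← heq]; ring⟩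
    have hdvd : d ∣ m := hco.dvd_of_dvd_mul_right hdvd2
    obtain ⟨e, he⟩ := hdvd
    have hd0 : 0 < d := by omega
    have he0 : 0 < e := by
      rcases Nat.eq_zero_or_pos e with h | h
      · subst h; simp at he; omega
      · exact h
    have hx_eq : x = 2 ^ (α + 1) * e := by
      have h2 : d * x = d * (2 ^ (α + 1) * e) := by
        calc d * x = x * d := by ring
        _ = 2 * (2 ^ α * m) := heq
        _ = d * (2 ^ (α + 1) * e) := by rw [he]; ring
      exact Nat.eq_of_mul_eq_mul_left hd0 h2
    refine ⟨e, ⟨d, by rw [he]; ring⟩, ?_, hx_eq⟩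
    have hdx : x < d := by omega
    calc 2 ^ (α + 1) * e ^ 2 = (2 ^ (α + 1) * e) * e := by ring
    _ = x * e := by rw [hx_eq]
    _ < d * e := (Nat.mul_lt_mul_right he0).mpr (by omega)
    _ = m := he.symm
  · rintro ⟨e, hdvd, hlt, hx⟩
    obtain ⟨d, hd⟩ := hdvd
    have he0 : 0 < e := by
      rcases Nat.eq_zero_or_pos e with h | h
      · subst h; simp at hd; omega
      · exact h
    have hd0 : 0 < d := by
      rcases Nat.eq_zero_or_pos d with h | h
      · subst h; simp at hd; omega
      · exact h
    have hdodd : ¬ 2 ∣ d := fun ⟨c, hc⟩ => hm ⟨e * c, by rw [hd, hc]; ring⟩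
    have hlt' : 2 ^ (α + 1) * e < d := by
      have h2 : (2 ^ (α + 1) * e) * e < d * e := by
        calc (2 ^ (α + 1) * e) * e = 2 ^ (α + 1) * e ^ 2 := by ring
        _ < m := hlt
        _ = d * e := by rw [hd]; ring
      exact Nat.lt_of_mul_lt_mul_right h2
    have hxeven : 2 ∣ x := ⟨2 ^ α * e, by rw [hx]; ring⟩
    have hx0 : 0 < x := by rw [hx]; positivity
    obtain ⟨a, ha, hta⟩ : ∃ a, 0 < a ∧ 2 * a = d - x + 1 := ⟨(d - x + 1) / 2, by omega⟩
    constructor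
    · rw [mem_lspec]
      refine ⟨hx0, a, ha, ?_⟩
      have hgoal : 2 * a + x - 1 = d := by omega
      rw [hgoal, hx, hd]; ring
    · exact (even_iff_two_dvd).mpr hxeven

def Bset (α m : ℕ) : Set ℕ := {d | d ∣ m ∧ d * (d + 1) ≤ 2 * (2 ^ α * m)}
def Aset (α m : ℕ) : Set ℕ := {e | e ∣ m ∧ 2 ^ (α + 1) * e ^ 2 < m}

lemma odds_eq {α m : ℕ} (hm : ¬ 2 ∣ m) (hm0 : 0 < m) :
    odds (lspec (2 ^ α * m)) = Bset α m := Set.ext fun _ => mem_odds_lspec hm hm0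

lemma evens_eq {α m : ℕ} (hm : ¬ 2 ∣ m) (hm0 : 0 < m) :
    evens (lspec (2 ^ α * m)) = (fun e => 2 ^ (α + 1) * e) '' Aset α m := by
  ext x
  rw [mem_evens_lspec hm hm0]
  constructor
  · rintro ⟨e, h1, h2, h3⟩; exact ⟨e, ⟨h1, h2⟩, h3.symm⟩
  · rintro ⟨e, ⟨h1, h2⟩, h3⟩; exact ⟨e, h1, h2, h3.symm⟩

lemma one_mem_B {α m : ℕ} (hm0 : 0 < m) : 1 ∈ Bset α m := by
  refine ⟨one_dvd m, ?_⟩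
  have h1 : 1 ≤ 2 ^ α := Nat.one_le_two_pow
  nlinarith

lemma B_bdd {α m : ℕ} (hm0 : 0 < m) : Bset α m ⊆ Set.Iic m :=
  fun d hd => Nat.le_of_dvd hm0 hd.1

lemma B_finite {α m : ℕ} (hm0 : 0 < m) : (Bset α m).Finite :=
  (Set.finite_Iic m).subset (B_bdd hm0)

lemma A_subset_B {α m : ℕ} : Aset α m ⊆ Bset α m := by
  rintro e ⟨h1, h2⟩
  refine ⟨h1, ?_⟩
  have h3 : 1 ≤ 2 ^ α := Nat.one_le_two_pow
  have he : e ≤ e ^ 2 := by nlinarith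
  have : 2 ^ (α + 1) * e ^ 2 = 2 * (2 ^ α * e ^ 2) := by ring
  nlinarith

lemma A_eq_B {α m : ℕ} (hm : ¬ 2 ∣ m) (hm0 : 0 < m)
    (hb : balancedSet (lspec (2 ^ α * m))) : Aset α m = Bset α m := by
  have hinj : Function.Injective (fun e : ℕ => 2 ^ (α + 1) * e) := fun a b h => by
    have h2 : (0:ℕ) < 2 ^ (α + 1) := Nat.pow_pos (by norm_num)
    exact Nat.eq_of_mul_eq_mul_left h2 h
  have hA : (evens (lspec (2 ^ α * m))).encard = (Aset α m).encard := by
    rw [evens_eq hm hm0, hinj.encard_image]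
  have hB : (odds (lspec (2 ^ α * m))).encard = (Bset α m).encard := by
    rw [odds_eq hm hm0]
  exact (B_finite hm0).eq_of_subset_of_encard_le' A_subset_B
    (le_of_eq (by rw [← hA, ← hB]; exact hb.symm))

lemma m₁_mem_B {α m : ℕ} (hm0 : 0 < m) : sSup (Bset α m) ∈ Bset α m :=
  Nat.sSup_mem ⟨1, one_mem_B hm0⟩ ⟨m, B_bdd hm0⟩

lemma le_m₁ {α m d : ℕ} (hm0 : 0 < m) (hd : d ∈ Bset α m) : d ≤ sSup (Bset α m) :=
  le_csSup ⟨m, B_bdd hm0⟩ hd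

lemma m₁_pos {α m : ℕ} (hm0 : 0 < m) : 0 < sSup (Bset α m) :=
  le_m₁ hm0 (one_mem_B hm0)

lemma m₁_mem_A {α m : ℕ} (hm : ¬ 2 ∣ m) (hm0 : 0 < m)
    (hb : balancedSet (lspec (2 ^ α * m))) :
    2 ^ (α + 1) * (sSup (Bset α m)) ^ 2 < m := by
  have h : sSup (Bset α m) ∈ Aset α m := by
    rw [A_eq_B hm hm0 hb]; exact m₁_mem_B hm0
  exact h.2

lemma sSup_evens_eq {α m : ℕ} (hm : ¬ 2 ∣ m) (hm0 : 0 < m)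
    (hb : balancedSet (lspec (2 ^ α * m))) :
    sSup (evens (lspec (2 ^ α * m))) = 2 ^ (α + 1) * sSup (Bset α m) := by
  rw [evens_eq hm hm0, A_eq_B hm hm0 hb]
  have hub : ∀ x ∈ (fun e : ℕ => 2 ^ (α + 1) * e) '' Bset α m,
      x ≤ 2 ^ (α + 1) * sSup (Bset α m) := by
    rintro x ⟨e, he, rfl⟩
    exact Nat.mul_le_mul_left _ (le_m₁ hm0 he)
  apply le_antisymm
  · exact csSup_le ⟨2 ^ (α + 1) * 1, ⟨1, one_mem_B hm0, rfl⟩⟩ hub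
  · exact le_csSup ⟨2 ^ (α + 1) * sSup (Bset α m), hub⟩
      ⟨sSup (Bset α m), m₁_mem_B hm0, rfl⟩

lemma dichotomy {α m d : ℕ} (hm : ¬ 2 ∣ m) (hm0 : 0 < m)
    (hb : balancedSet (lspec (2 ^ α * m))) (hdvd : d ∣ m)
    (hlt : sSup (Bset α m) * d < m) : d ∈ Bset α m := by
  by_contra hdB
  obtain ⟨e, he⟩ := hdvd
  have hd0 : 0 < d := by
    rcases Nat.eq_zero_or_pos d with h | h
    · subst h; simp at he; omega
    · exact h
  have he0 : 0 < e := by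
    rcases Nat.eq_zero_or_pos e with h | h
    · subst h; simp at he; omega
    · exact h
  have hgt : ¬ (d * (d + 1) ≤ 2 * (2 ^ α * m)) := fun h => hdB ⟨⟨e, he⟩, h⟩
  push_neg at hgt
  have hd1 : 2 ^ (α + 1) * e < d + 1 := by
    have h2 : d * (2 ^ (α + 1) * e) < d * (d + 1) := by
      calc d * (2 ^ (α + 1) * e) = 2 * (2 ^ α * m) := by rw [he]; ring
      _ < d * (d + 1) := hgt
    exact Nat.lt_of_mul_lt_mul_left h2
  have hdodd : ¬ 2 ∣ d := fun ⟨c, hc⟩ => hm ⟨c * e, by rw [he, hc]; ring⟩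
  have hne : 2 ^ (α + 1) * e ≠ d := by
    intro h
    apply hdodd
    exact ⟨2 ^ α * e, by rw [← h]; ring⟩
  have hd2 : 2 ^ (α + 1) * e < d := by omega
  have heA : e ∈ Aset α m := by
    refine ⟨⟨d, by rw [he]; ring⟩, ?_⟩
    calc 2 ^ (α + 1) * e ^ 2 = (2 ^ (α + 1) * e) * e := by ring
    _ < d * e := (Nat.mul_lt_mul_right he0).mpr hd2
    _ = m := he.symm
  have heB : e ∈ Bset α m := A_subset_B heA
  have : m ≤ sSup (Bset α m) * d := by
    calc m = d * e := he
    _ ≤ d * sSup (Bset α m) := Nat.mul_le_mul_left _ (le_m₁ hm0 heB)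
    _ = sSup (Bset α m) * d := by ring
  omega

lemma div_m₁_mem_B {α m d : ℕ} (hm0 : 0 < m) (hd : d ∣ sSup (Bset α m)) :
    d ∈ Bset α m := by
  have hm₁ := m₁_mem_B (α := α) (m := m) hm0
  refine ⟨hd.trans hm₁.1, ?_⟩
  have hle : d ≤ sSup (Bset α m) := Nat.le_of_dvd (m₁_pos hm0) hd
  calc d * (d + 1) ≤ sSup (Bset α m) * (sSup (Bset α m) + 1) :=
        Nat.mul_le_mul hle (by omega)
  _ ≤ 2 * (2 ^ α * m) := hm₁.2

/-- If every proper divisor of `a` divides `m₁` but `a` itself exceeds `m₁`,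
then `a = q ^ (v_q(m₁) + 1)` for some prime `q`. -/
lemma aux_prime_power {m₁ a : ℕ} (hm₁ : 0 < m₁) (ha : m₁ < a) (ha2 : 2 ≤ a)
    (hkey : ∀ w, w ∣ a → w < a → w ∣ m₁) :
    ∃ q, q.Prime ∧ a = q ^ (m₁.factorization q + 1) := by
  have ha0 : a ≠ 0 := by omega
  have ham₁ : ¬ a ∣ m₁ := fun h => absurd (Nat.le_of_dvd hm₁ h) (by omega)
  set q := a.minFac with hqdef
  have hq : q.Prime := Nat.minFac_prime (by omega)
  have hqa : q ∣ a := Nat.minFac_dvd a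
  obtain ⟨k', hk'⟩ : ∃ k', a.factorization q = k' + 1 :=
    ⟨a.factorization q - 1, by
      have := (Nat.Prime.factorization_pos_of_dvd hq ha0 hqa); omega⟩
  have hplus : q ^ (k' + 1) * (ordCompl[q] a) = a := by
    rw [← hk']; exact Nat.ordProj_mul_ordCompl_eq_self a q
  set s := ordCompl[q] a with hsdef
  have hs0 : 0 < s := Nat.ordCompl_pos q ha0
  have hqs : ¬ q ∣ s := Nat.not_dvd_ordCompl hq ha0
  have hq1 : 1 < q := hq.one_lt
  have hs1 : s = 1 := by
    by_contra hs1
    have hr : s.minFac.Prime := Nat.minFac_prime hs1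
    set r := s.minFac with hrdef
    obtain ⟨s', hss'⟩ : r ∣ s := Nat.minFac_dvd s
    have hs'0 : 0 < s' := by
      rcases Nat.eq_zero_or_pos s' with h | h
      · subst h; simp at hss'; omega
      · exact h
    have hw₁ : q ^ k' * s ∣ m₁ := by
      apply hkey
      · exact ⟨q, by rw [← hplus]; ring⟩
      · rw [← hplus]
        have : q ^ k' < q ^ (k' + 1) := Nat.pow_lt_pow_succ hq1
        calc q ^ k' * s < q ^ (k' + 1) * s := (Nat.mul_lt_mul_right hs0).mpr this
        _ = q ^ (k' + 1) * s := rfl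
    have hw₂ : q ^ (k' + 1) * s' ∣ m₁ := by
      apply hkey
      · exact ⟨r, by rw [← hplus, hss']; ring⟩
      · rw [← hplus, hss']
        have h1 : s' < r * s' := by nlinarith [hr.two_le]
        calc q ^ (k' + 1) * s' < q ^ (k' + 1) * (r * s') :=
          (Nat.mul_lt_mul_left (Nat.pow_pos (by omega))).mpr h1
        _ = q ^ (k' + 1) * (r * s') := rfl
    have hcop : Nat.Coprime (q ^ (k' + 1)) s := ((hq.coprime_iff_not_dvd).mpr hqs).pow_left _
    have : a ∣ m₁ := by
      rw [← hplus]
      exact hcop.mul_dvd_of_dvd_of_dvd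
        ((dvd_mul_right _ _).trans hw₂)
        ((dvd_mul_left s (q ^ k')).trans hw₁)
    exact ham₁ this
  rw [hs1, mul_one] at hplus
  have h1 : q ^ k' ∣ m₁ := by
    apply hkey
    · exact hplus ▸ pow_dvd_pow q (by omega)
    · rw [← hplus]; exact Nat.pow_lt_pow_succ hq1
  have hμq : k' ≤ m₁.factorization q :=
    (Nat.Prime.pow_dvd_iff_le_factorization hq hm₁.ne').mp h1
  have hk2 : m₁.factorization q < k' + 1 := by
    by_contra h
    push_neg at h
    exact ham₁ (hplus ▸ (pow_dvd_pow q h).trans (Nat.ordProj_dvd m₁ q))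
  have hkμ : k' = m₁.factorization q := by omega
  exact ⟨q, hq, by rw [← hplus, hkμ]⟩

/-- A divisor of `m₁ * q^(μ+1)` (where `μ = v_q(m₁)`) not divisible by `q^(μ+1)`
divides `m₁`. -/
lemma aux_dvd_absorb {m₁ q d : ℕ} (hq : q.Prime) (hm₁ : m₁ ≠ 0)
    (hd : d ∣ m₁ * q ^ (m₁.factorization q + 1))
    (hnd : ¬ q ^ (m₁.factorization q + 1) ∣ d) : d ∣ m₁ := by
  have hma : m₁ * q ^ (m₁.factorization q + 1) ≠ 0 :=
    Nat.mul_ne_zero hm₁ (pow_ne_zero _ hq.pos.ne')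
  have hd0 : d ≠ 0 := by rintro rfl; exact hma (Nat.eq_zero_of_zero_dvd hd)
  have hvd : d.factorization q ≤ m₁.factorization q := by
    by_contra h
    push_neg at h
    exact hnd ((Nat.Prime.pow_dvd_iff_le_factorization hq hd0).mpr h)
  rw [← Nat.factorization_le_iff_dvd hd0 hm₁]
  intro p
  have hle : d.factorization p ≤ (m₁ * q ^ (m₁.factorization q + 1)).factorization p :=
    (Nat.factorization_le_iff_dvd hd0 hma).mpr hd p
  rw [Nat.factorization_mul hm₁ (pow_ne_zero _ hq.pos.ne'), Finsupp.add_apply,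
    hq.factorization_pow, Finsupp.single_apply] at hle
  by_cases hpq : p = q
  · subst hpq; exact hvd
  · simpa [Ne.symm hpq] using hle

/-- A balanced spectrum `S` is non-excessive iff `E(S)` is empty or `E(S) = {q^(μ_q+1)}`
for some prime `q`; in particular a non-excessive spectrum has `|E(S)| ≤ 1`. -/
theorem nonExcessive_iff_excSet (n : ℕ) (hn : 0 < n) (hb : balancedSet (lspec n)) :
    (nonExcessive (lspec n) ↔
      excSet (lspec n) = ∅ ∨
        ∃ q : ℕ, q.Prime ∧ excSet (lspec n) = {q ^ (muIdx (lspec n) q + 1)}) ∧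
    (nonExcessive (lspec n) → (excSet (lspec n)).encard ≤ 1) := by
  obtain ⟨α, m, hm, heq⟩ := Nat.exists_eq_pow_mul_and_not_dvd hn.ne' 2 (by norm_num)
  subst heq
  have hm0 : 0 < m := by
    rcases Nat.eq_zero_or_pos m with h | h
    · subst h; simp at hn
    · exact h
  set m₁ := sSup (Bset α m) with hm₁def
  have hOdds : odds (lspec (2 ^ α * m)) = Bset α m := odds_eq hm hm0
  have hSupO : sSup (odds (lspec (2 ^ α * m))) = m₁ := by rw [hOdds]
  have hSupE : sSup (evens (lspec (2 ^ α * m))) = 2 ^ (α + 1) * m₁ := sSup_evens_eq hm hm0 hb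
  have hβ : 2 ≤ 2 ^ (α + 1) := by
    have h := Nat.pow_le_pow_right (show 1 ≤ 2 by norm_num) (show 1 ≤ α + 1 by omega)
    simpa using h
  have hm₁pos : 0 < m₁ := m₁_pos hm0
  have hm₁A : 2 ^ (α + 1) * m₁ ^ 2 < m := m₁_mem_A hm hm0 hb
  have hm₁dvd : m₁ ∣ m := (m₁_mem_B hm0).1
  have h2m₁ : 2 * m₁ ≤ 2 ^ (α + 1) * m₁ := Nat.mul_le_mul_right m₁ hβ
  have hNE : nonExcessive (lspec (2 ^ α * m)) ↔ Bset α m = {d | d ∣ m₁} := by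
    unfold nonExcessive
    rw [hSupO, hOdds]
  have hμeq : ∀ q, muIdx (lspec (2 ^ α * m)) q = m₁.factorization q := by
    intro q; unfold muIdx; rw [hSupO]
  have hE_iff : excSet (lspec (2 ^ α * m)) =
      {a | (∃ b ∈ Bset α m, ∃ c ∈ Bset α m, a = b * c) ∧ 2 ^ (α + 1) * m₁ < a ∧
        {d | d ∣ m₁ * a ∧ d < a} = Bset α m} := by
    unfold excSet
    rw [hSupE, hSupO, hOdds]
  -- Part A: non-excessive ⇒ every exceptional element has the prime-power shape
  have shape : nonExcessive (lspec (2 ^ α * m)) → ∀ a ∈ excSet (lspec (2 ^ α * m)),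
      ∃ q, q.Prime ∧ 1 ≤ m₁.factorization q ∧ a = q ^ (m₁.factorization q + 1) := by
    intro hne a ha
    rw [hE_iff] at ha
    obtain ⟨⟨b, hb', c, hc', habc⟩, hgt, hds⟩ := ha
    rw [hNE] at hne
    have hbdvd : b ∣ m₁ := by rw [hne] at hb'; exact hb'
    have hcdvd : c ∣ m₁ := by rw [hne] at hc'; exact hc'
    have ham₁ : m₁ < a := by omega
    have ha2 : 2 ≤ a := by omega
    have hkey : ∀ w, w ∣ a → w < a → w ∣ m₁ := by
      intro w hw hlt
      have hwmem : w ∈ Bset α m := by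
        rw [← hds]; exact ⟨hw.mul_left m₁, hlt⟩
      rw [hne] at hwmem; exact hwmem
    obtain ⟨q, hq, haq⟩ := aux_prime_power hm₁pos ham₁ ha2 hkey
    refine ⟨q, hq, ?_, haq⟩
    by_contra hμ0
    push_neg at hμ0
    have hμz : m₁.factorization q = 0 := by omega
    rw [hμz] at haq
    simp only [zero_add, pow_one] at haq
    have hbq : b ∣ q := haq ▸ habc ▸ Dvd.intro c rfl
    rcases (hq.eq_one_or_self_of_dvd b hbq) with h1 | h1
    · have hcq : c = q := by rw [haq, h1, one_mul] at habc; omega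
      have : 0 < m₁.factorization q :=
        hq.factorization_pos_of_dvd hm₁pos.ne' (hcq ▸ hcdvd)
      omega
    · have : 0 < m₁.factorization q :=
        hq.factorization_pos_of_dvd hm₁pos.ne' (h1 ▸ hbdvd)
      omega
  -- uniqueness
  have uniq : nonExcessive (lspec (2 ^ α * m)) → ∀ a ∈ excSet (lspec (2 ^ α * m)),
      ∀ a' ∈ excSet (lspec (2 ^ α * m)), a = a' := by
    intro hne a ha a' ha'
    obtain ⟨q, hq, hμq, haq⟩ := shape hne a ha
    obtain ⟨r, hr, hμr, har⟩ := shape hne a' ha'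
    by_cases hqr : q = r
    · rw [haq, har, hqr]
    exfalso
    have hco : Nat.Coprime (q ^ (m₁.factorization q)) (r ^ (m₁.factorization r)) :=
      (Nat.Coprime.pow _ _ ((Nat.coprime_primes hq hr).mpr hqr))
    have h1 : q ^ (m₁.factorization q) * r ^ (m₁.factorization r) ∣ m₁ :=
      hco.mul_dvd_of_dvd_of_dvd (Nat.ordProj_dvd m₁ q) (Nat.ordProj_dvd m₁ r)
    have h2 : q ^ (m₁.factorization q) * r ^ (m₁.factorization r) ≤ m₁ :=
      Nat.le_of_dvd hm₁pos h1
    rw [hE_iff] at ha ha'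
    have hgt : 2 ^ (α + 1) * m₁ < a := ha.2.1
    have hgt' : 2 ^ (α + 1) * m₁ < a' := ha'.2.1
    have hqgt : 2 * r ^ (m₁.factorization r) < q := by
      have hstep : q ^ (m₁.factorization q) * (2 * r ^ (m₁.factorization r)) <
          q ^ (m₁.factorization q) * q := by
        calc q ^ (m₁.factorization q) * (2 * r ^ (m₁.factorization r))
            = 2 * (q ^ (m₁.factorization q) * r ^ (m₁.factorization r)) := by ring
        _ ≤ 2 * m₁ := by omega
        _ ≤ 2 ^ (α + 1) * m₁ := h2m₁
        _ < a := hgt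
        _ = q ^ (m₁.factorization q) * q := by rw [haq, pow_succ]
      exact Nat.lt_of_mul_lt_mul_left hstep
    have hrgt : 2 * q ^ (m₁.factorization q) < r := by
      have hstep : r ^ (m₁.factorization r) * (2 * q ^ (m₁.factorization q)) <
          r ^ (m₁.factorization r) * r := by
        calc r ^ (m₁.factorization r) * (2 * q ^ (m₁.factorization q))
            = 2 * (q ^ (m₁.factorization q) * r ^ (m₁.factorization r)) := by ring
        _ ≤ 2 * m₁ := by omega
        _ ≤ 2 ^ (α + 1) * m₁ := h2m₁
        _ < a' := hgt'
        _ = r ^ (m₁.factorization r) * r := by rw [har, pow_succ]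
      exact Nat.lt_of_mul_lt_mul_left hstep
    have hqr2 : r ≤ r ^ (m₁.factorization r) := by
      calc r = r ^ 1 := (pow_one r).symm
      _ ≤ r ^ (m₁.factorization r) := Nat.pow_le_pow_right hr.pos hμr
    have hqq2 : q ≤ q ^ (m₁.factorization q) := by
      calc q = q ^ 1 := (pow_one q).symm
      _ ≤ q ^ (m₁.factorization q) := Nat.pow_le_pow_right hq.pos hμq
    omega
  refine ⟨⟨?_, ?_⟩, fun hne => Set.encard_le_one_iff.mpr (fun a b ha hb => uniq hne a ha b hb)⟩
  · -- forward
    intro hne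
    rcases Set.eq_empty_or_nonempty (excSet (lspec (2 ^ α * m))) with h | ⟨a, ha⟩
    · exact Or.inl h
    right
    obtain ⟨q, hq, hμ1, haq⟩ := shape hne a ha
    refine ⟨q, hq, ?_⟩
    rw [hμeq q]
    refine Set.eq_singleton_iff_unique_mem.mpr ⟨haq ▸ ha, fun x hx => ?_⟩
    rw [uniq hne x hx a ha, haq]
  · -- backward
    rintro (hE | ⟨q, hq, hEq⟩)
    · by_contra hne
      rw [hNE] at hne
      have hsub : {d : ℕ | d ∣ m₁} ⊆ Bset α m := fun d hd => div_m₁_mem_B hm0 hd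
      obtain ⟨x, hxB, hxnd⟩ : ∃ x ∈ Bset α m, ¬ x ∣ m₁ := by
        by_contra h
        push_neg at h
        exact hne (Set.Subset.antisymm (fun d hd => h d hd) hsub)
      obtain ⟨M, hMdef⟩ := hm₁dvd
      have hM0 : 0 < M := by
        rcases Nat.eq_zero_or_pos M with h | h
        · rw [h, mul_zero] at hMdef; omega
        · exact h
      have hMgt : 2 ^ (α + 1) * m₁ < M := by
        have hstep : m₁ * (2 ^ (α + 1) * m₁) < m₁ * M := by
          calc m₁ * (2 ^ (α + 1) * m₁) = 2 ^ (α + 1) * m₁ ^ 2 := by ring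
          _ < m := hm₁A
          _ = m₁ * M := hMdef
        exact Nat.lt_of_mul_lt_mul_left hstep
      have hm₁M : m₁ < M := by omega
      have hM1 : M ≠ 1 := by omega
      have hMnp : ¬ M.Prime := by
        intro hP
        apply hxnd
        have hxm : x ∣ m₁ * M := hMdef ▸ hxB.1
        have hx0 : 0 < x := by
          rcases Nat.eq_zero_or_pos x with h | h
          · exfalso; rw [h] at hxB; have := Nat.eq_zero_of_zero_dvd hxB.1; omega
          · exact h
        have hxle : x ≤ m₁ := le_m₁ hm0 hxB
        have hMx : ¬ M ∣ x := fun h => by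
          have := Nat.le_of_dvd hx0 h; omega
        exact ((hP.coprime_iff_not_dvd).mpr hMx).symm.dvd_of_dvd_mul_right hxm
      obtain ⟨b0, hb0, hb0dvd⟩ : ∃ p, Nat.Prime p ∧ p ∣ M :=
        ⟨M.minFac, Nat.minFac_prime hM1, Nat.minFac_dvd M⟩
      obtain ⟨c0, hc0⟩ := hb0dvd
      have hb0ne : b0 ≠ M := fun h => hMnp (h ▸ hb0)
      have hb0lt : b0 < M :=
        lt_of_le_of_ne (Nat.le_of_dvd hM0 ⟨c0, hc0⟩) hb0ne
      have hc00 : 0 < c0 := by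
        rcases Nat.eq_zero_or_pos c0 with h | h
        · rw [h, mul_zero] at hc0; omega
        · exact h
      have hc0lt : c0 < M := by nlinarith [hb0.two_le]
      have hb0B : b0 ∈ Bset α m := by
        apply dichotomy hm hm0 hb
        · exact ⟨m₁ * c0, by calc m = m₁ * M := hMdef
                                _ = b0 * (m₁ * c0) := by rw [hc0]; ring⟩
        · show m₁ * b0 < m
          calc m₁ * b0 < m₁ * M := Nat.mul_lt_mul_left hm₁pos |>.mpr hb0lt
          _ = m := hMdef.symm
      have hc0B : c0 ∈ Bset α m := by
        apply dichotomy hm hm0 hb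
        · exact ⟨m₁ * b0, by calc m = m₁ * M := hMdef
                                _ = c0 * (m₁ * b0) := by rw [hc0]; ring⟩
        · show m₁ * c0 < m
          calc m₁ * c0 < m₁ * M := Nat.mul_lt_mul_left hm₁pos |>.mpr hc0lt
          _ = m := hMdef.symm
      have hME : M ∈ excSet (lspec (2 ^ α * m)) := by
        rw [hE_iff]
        refine ⟨⟨b0, hb0B, c0, hc0B, hc0⟩, hMgt, ?_⟩
        ext d
        simp only [Set.mem_setOf_eq]
        constructor
        · rintro ⟨hd1, hd2⟩
          apply dichotomy hm hm0 hb
          · rw [hMdef]; exact hd1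
          · show m₁ * d < m
            calc m₁ * d < m₁ * M := Nat.mul_lt_mul_left hm₁pos |>.mpr hd2
            _ = m := hMdef.symm
        · intro hdB
          refine ⟨by rw [← hMdef]; exact hdB.1, ?_⟩
          have h9 : d ≤ m₁ := le_m₁ hm0 hdB
          omega
      rw [hE] at hME
      exact Set.notMem_empty M hME
    · have haE : q ^ (muIdx (lspec (2 ^ α * m)) q + 1) ∈ excSet (lspec (2 ^ α * m)) := by
        rw [hEq]; rfl
      rw [hμeq q] at haE
      rw [hE_iff] at haE
      obtain ⟨_, hgt, hds⟩ := haE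
      have hm₁a : m₁ < q ^ (m₁.factorization q + 1) := by omega
      rw [hNE]
      apply Set.Subset.antisymm
      · intro d hdB
        have hd : d ∣ m₁ * q ^ (m₁.factorization q + 1) ∧ d < q ^ (m₁.factorization q + 1) := by
          rw [← hds] at hdB; exact hdB
        have hd0 : 0 < d := by
          rcases Nat.eq_zero_or_pos d with h | h
          · exfalso
            rw [h] at hd
            have hz := Nat.eq_zero_of_zero_dvd hd.1
            have : (0:ℕ) < m₁ * q ^ (m₁.factorization q + 1) :=
              Nat.mul_pos hm₁pos (Nat.pow_pos hq.pos)
            omega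
          · exact h
        have hnd : ¬ q ^ (m₁.factorization q + 1) ∣ d := fun h => by
          have := Nat.le_of_dvd hd0 h; omega
        exact aux_dvd_absorb hq hm₁pos.ne' hd.1 hnd
      · intro d hd
        rw [← hds]
        exact ⟨dvd_mul_of_dvd_left hd _,
          lt_of_le_of_lt (Nat.le_of_dvd hm₁pos hd) hm₁a⟩
end

section
/- For every positive integer n, the spectral class L(n) has either exactly 1, exactly 2, or infinitely many elements. Moreover: |L(n)| = 1 if and only if lspec(n) is lopsided, or lspec(n) is balanced and excessive with |E(lspec(n))| = 1; |L(n)| = 2 if and only if lspec(n) is balanced and excessive with |E(lspec(n))| = 2; and L(n) is infinite if and only if lspec(n) is unmixed, or lspec(n) is balanced and non-excessive. -/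
namespace SpecAux

lemma sum_formula (a l : ℕ) :
    2 * (∑ i ∈ Finset.range l, (a + i)) + l = l * (2 * a + l) := by
  induction l with
  | zero => simp
  | succ k ih =>
    rw [Finset.sum_range_succ]
    have h2 : 2 * ((∑ i ∈ Finset.range k, (a + i)) + (a + k)) + (k + 1)
        = (2 * (∑ i ∈ Finset.range k, (a + i)) + k) + (2 * a + 2 * k + 1) := by ring
    rw [h2, ih]; ring

lemma mem_lspec_iff {n l : ℕ} (hn : 0 < n) :
    l ∈ lspec n ↔ ∃ l', l * l' = 2 * n ∧ l < l' ∧ Odd (l + l') := by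
  constructor
  · rintro ⟨hl, a, ha, hsum⟩
    have hf := sum_formula a l
    rw [hsum] at hf
    refine ⟨2 * a + l - 1, ?_, by omega, ⟨a + l - 1, by omega⟩⟩
    have key : l * (2 * a + l - 1) + l = l * (2 * a + l) := by
      have h1 : 2 * a + l - 1 + 1 = 2 * a + l := by omega
      calc l * (2 * a + l - 1) + l = l * ((2 * a + l - 1) + 1) := by ring
        _ = l * (2 * a + l) := by rw [h1]
    have := hf ▸ key
    omega
  · rintro ⟨l', hmul, hlt, c, hc⟩
    have hl : 0 < l := by
      rcases Nat.eq_zero_or_pos l with h | h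
      · subst h; simp at hmul; omega
      · exact h
    refine ⟨hl, c + 1 - l, by omega, ?_⟩
    have hf := sum_formula (c + 1 - l) l
    have h1 : l * (2 * (c + 1 - l) + l) = l * (l' + 1) := by
      congr 1; omega
    rw [h1, Nat.mul_succ, hmul] at hf
    omega


/-- odd part of the spectrum -/
def S1 (e m : ℕ) : Set ℕ := {d | d ∣ m ∧ d * d < 2 ^ (e + 1) * m}

/-- scaled-down even part of the spectrum -/
def CS (e m : ℕ) : Set ℕ := {c | c ∣ m ∧ 2 ^ (e + 1) * (c * c) < m}

lemma two_n (e m : ℕ) : 2 * (2 ^ e * m) = 2 ^ (e + 1) * m := by ring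

lemma odd_of_dvd {m d : ℕ} (hm : Odd m) (h : d ∣ m) : Odd d := by
  obtain ⟨k, rfl⟩ := h
  exact (Nat.odd_mul.mp hm).1

lemma mem_lspec_odd {e m l : ℕ} (hm : Odd m) (hl : Odd l) :
    l ∈ lspec (2 ^ e * m) ↔ (l ∣ m ∧ l * l < 2 ^ (e + 1) * m) := by
  have hm0 : 0 < m := hm.pos
  have hn : 0 < 2 ^ e * m := by positivity
  rw [mem_lspec_iff hn]
  constructor
  · rintro ⟨l', hmul, hlt, hodd⟩
    rw [two_n] at hmul
    have hld : l ∣ 2 ^ (e + 1) * m := Dvd.intro l' hmul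
    have hcop : Nat.Coprime l (2 ^ (e + 1)) :=
      Nat.Coprime.pow_right _ (Nat.coprime_comm.mp
        ((Nat.Prime.coprime_iff_not_dvd Nat.prime_two).mpr (by
          rw [Nat.odd_iff] at hl; omega)))
    refine ⟨(Nat.Coprime.dvd_mul_left hcop).mp hld, ?_⟩
    calc l * l < l * l' := by
          have h0 : 0 < l := hl.pos
          exact (Nat.mul_lt_mul_left h0).mpr hlt
      _ = 2 ^ (e + 1) * m := hmul
  · rintro ⟨⟨k, rfl⟩, hlt⟩
    refine ⟨2 ^ (e + 1) * k, by ring, ?_, ?_⟩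
    · have h0 : 0 < l := hl.pos
      have : l * l < l * (2 ^ (e + 1) * k) := by
        calc l * l < 2 ^ (e + 1) * (l * k) := hlt
          _ = l * (2 ^ (e + 1) * k) := by ring
      exact lt_of_mul_lt_mul_left this (le_of_lt h0)
    · have hk : 0 < k := by
        rcases Nat.eq_zero_or_pos k with h | h
        · subst h; simp at hm0
        · exact h
      exact hl.add_even ((Nat.even_pow.mpr ⟨even_two, by omega⟩).mul_right k)

lemma mem_lspec_even {e m l : ℕ} (hm : Odd m) (hl : Even l) :
    l ∈ lspec (2 ^ e * m) ↔ ∃ c, c ∣ m ∧ l = 2 ^ (e + 1) * c ∧ l * l < 2 ^ (e + 1) * m := by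
  have hm0 : 0 < m := hm.pos
  have hn : 0 < 2 ^ e * m := by positivity
  rw [mem_lspec_iff hn]
  constructor
  · rintro ⟨l', hmul, hlt, hodd⟩
    rw [two_n] at hmul
    have hol' : Odd l' := by
      rcases Nat.even_or_odd l' with h | h
      · exfalso; rw [Nat.even_iff] at hl h; rw [Nat.odd_iff] at hodd; omega
      · exact h
    have hl'd : l' ∣ 2 ^ (e + 1) * m := Dvd.intro_left l hmul
    have hcop : Nat.Coprime l' (2 ^ (e + 1)) :=
      Nat.Coprime.pow_right _ (Nat.coprime_comm.mp
        ((Nat.Prime.coprime_iff_not_dvd Nat.prime_two).mpr (by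
          rw [Nat.odd_iff] at hol'; omega)))
    obtain ⟨k, hk⟩ := (Nat.Coprime.dvd_mul_left hcop).mp hl'd
    have hl'0 : 0 < l' := hol'.pos
    have hleq : l = 2 ^ (e + 1) * k := by
      have h1 : l' * l = l' * (2 ^ (e + 1) * k) := by
        calc l' * l = 2 ^ (e + 1) * m := by rw [← hmul]; ring
          _ = l' * (2 ^ (e + 1) * k) := by rw [hk]; ring
      exact Nat.eq_of_mul_eq_mul_left hl'0 h1
    refine ⟨k, Dvd.intro_left l' hk.symm, hleq, ?_⟩
    have hl0 : 0 < l := by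
      rcases Nat.eq_zero_or_pos l with h | h
      · exfalso; subst h; simp at hmul; omega
      · exact h
    calc l * l < l * l' := (Nat.mul_lt_mul_left hl0).mpr hlt
      _ = 2 ^ (e + 1) * m := hmul
  · rintro ⟨c, hc, rfl, hlt⟩
    obtain ⟨k, hk⟩ := hc
    have hc0 : 0 < c := by
      rcases Nat.eq_zero_or_pos c with h | h
      · exfalso; subst h; simp at hk; omega
      · exact h
    have hk0 : 0 < k := by
      rcases Nat.eq_zero_or_pos k with h | h
      · exfalso; subst h; simp at hk; omega
      · exact h
    have hok : Odd k := by
      rw [hk] at hm; exact (Nat.odd_mul.mp hm).2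
    refine ⟨k, by rw [hk]; ring, ?_, hl.add_odd hok⟩
    have h0 : 0 < 2 ^ (e + 1) * c := by positivity
    have : (2 ^ (e + 1) * c) * (2 ^ (e + 1) * c) < (2 ^ (e + 1) * c) * k := by
      calc (2 ^ (e + 1) * c) * (2 ^ (e + 1) * c) < 2 ^ (e + 1) * m := hlt
        _ = (2 ^ (e + 1) * c) * k := by rw [hk]; ring
    exact lt_of_mul_lt_mul_left this (le_of_lt h0)

lemma odds_lspec {e m : ℕ} (hm : Odd m) : odds (lspec (2 ^ e * m)) = S1 e m := by
  ext x
  constructor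
  · rintro ⟨hx, hox⟩
    exact (mem_lspec_odd hm hox).mp hx
  · intro hx
    have hox : Odd x := odd_of_dvd hm hx.1
    exact ⟨(mem_lspec_odd hm hox).mpr hx, hox⟩

lemma evens_lspec {e m : ℕ} (hm : Odd m) :
    evens (lspec (2 ^ e * m)) = (fun c => 2 ^ (e + 1) * c) '' CS e m := by
  ext x
  constructor
  · rintro ⟨hx, hex⟩
    obtain ⟨c, hc, rfl, hlt⟩ := (mem_lspec_even hm hex).mp hx
    refine ⟨c, ⟨hc, ?_⟩, rfl⟩
    have h1 : (2:ℕ) ^ (e + 1) * (2 ^ (e + 1) * (c * c)) < 2 ^ (e + 1) * m := by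
      calc (2:ℕ) ^ (e + 1) * (2 ^ (e + 1) * (c * c)) = (2 ^ (e + 1) * c) * (2 ^ (e + 1) * c) := by
            ring
        _ < 2 ^ (e + 1) * m := hlt
    exact lt_of_mul_lt_mul_left h1 (by positivity)
  · rintro ⟨c, ⟨hc, hlt⟩, rfl⟩
    have hex : Even (2 ^ (e + 1) * c) := (Nat.even_pow.mpr ⟨even_two, by omega⟩).mul_right c
    refine ⟨(mem_lspec_even hm hex).mpr ⟨c, hc, rfl, ?_⟩, hex⟩
    calc (2 ^ (e + 1) * c) * (2 ^ (e + 1) * c) = 2 ^ (e + 1) * (2 ^ (e + 1) * (c * c)) := by ring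
      _ < 2 ^ (e + 1) * m := by
          exact (Nat.mul_lt_mul_left (show 0 < (2:ℕ) ^ (e + 1) by positivity)).mpr hlt


lemma one_mem_S1 {e m : ℕ} (hm0 : 0 < m) : 1 ∈ S1 e m := by
  refine ⟨one_dvd m, ?_⟩
  have h2 : 2 ≤ 2 ^ (e + 1) := by
    calc 2 = 2 ^ 1 := by norm_num
      _ ≤ 2 ^ (e + 1) := Nat.pow_le_pow_right (by norm_num) (by omega)
  calc 1 * 1 = 1 := by norm_num
    _ < 2 ^ (e + 1) * m := by
        calc 1 < 2 * 1 := by norm_num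
          _ ≤ 2 ^ (e + 1) * m := Nat.mul_le_mul h2 hm0

lemma S1_bdd {e m : ℕ} (hm0 : 0 < m) : BddAbove (S1 e m) :=
  ⟨m, fun _ hx => Nat.le_of_dvd hm0 hx.1⟩

lemma S1_finite (e m : ℕ) (hm0 : 0 < m) : (S1 e m).Finite :=
  Set.Finite.subset (Set.finite_Iic m) (fun _ hx => Nat.le_of_dvd hm0 hx.1)

lemma m1_mem {e m : ℕ} (hm0 : 0 < m) : sSup (S1 e m) ∈ S1 e m :=
  Nat.sSup_mem ⟨1, one_mem_S1 hm0⟩ (S1_bdd hm0)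

lemma le_m1 {e m x : ℕ} (hm0 : 0 < m) (hx : x ∈ S1 e m) : x ≤ sSup (S1 e m) :=
  le_csSup (S1_bdd hm0) hx

lemma m1_pos {e m : ℕ} (hm0 : 0 < m) : 0 < sSup (S1 e m) :=
  lt_of_lt_of_le one_pos (le_m1 hm0 (one_mem_S1 hm0))

lemma CS_subset_S1 {e m : ℕ} : CS e m ⊆ S1 e m := by
  rintro c ⟨hc, hlt⟩
  refine ⟨hc, ?_⟩
  calc c * c ≤ 2 ^ (e + 1) * (c * c) := Nat.le_mul_of_pos_left _ (by positivity)
    _ < m := hlt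
    _ ≤ 2 ^ (e + 1) * m := Nat.le_mul_of_pos_left _ (by positivity)

lemma S1_dvd_closed {e m x y : ℕ} (hm0 : 0 < m) (hxy : x ∣ y) (hy : y ∈ S1 e m) :
    x ∈ S1 e m := by
  refine ⟨hxy.trans hy.1, ?_⟩
  have hy0 : 0 < y := Nat.pos_of_dvd_of_pos hy.1 hm0
  have hxle : x ≤ y := Nat.le_of_dvd hy0 hxy
  calc x * x ≤ y * y := Nat.mul_le_mul hxle hxle
    _ < 2 ^ (e + 1) * m := hy.2

/-- divisor pairing between S1 and complement of CS -/
lemma pair_iff {e m d d' : ℕ} (hm : Odd m) (hdd' : d * d' = m) :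
    d ∈ S1 e m ↔ d' ∉ CS e m := by
  have hm0 : 0 < m := hm.pos
  have hd : 0 < d := by
    rcases Nat.eq_zero_or_pos d with h | h
    · exfalso; subst h; simp at hdd'; omega
    · exact h
  have hd' : 0 < d' := by
    rcases Nat.eq_zero_or_pos d' with h | h
    · exfalso; subst h; simp at hdd'; omega
    · exact h
  have hddvd : d ∣ m := Dvd.intro d' hdd'
  have hd'dvd : d' ∣ m := Dvd.intro_left d hdd'
  have hodd : Odd (d * d) := Nat.odd_mul.mpr ⟨odd_of_dvd hm hddvd, odd_of_dvd hm hddvd⟩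
  have heven : Even (2 ^ (e + 1) * m) := (Nat.even_pow.mpr ⟨even_two, by omega⟩).mul_right m
  have hne : d * d ≠ 2 ^ (e + 1) * m := by
    intro h; rw [h] at hodd; exact (Nat.not_odd_iff_even.mpr heven) hodd
  have key : 2 ^ (e + 1) * (d' * d') < m ↔ 2 ^ (e + 1) * m < d * d := by
    constructor
    · intro h
      have h1 : (2 ^ (e + 1) * (d' * d')) * (d * d) < m * (d * d) :=
        (Nat.mul_lt_mul_right (by positivity)).mpr h
      have h2 : (2 ^ (e + 1) * (d' * d')) * (d * d) = (2 ^ (e + 1) * m) * m := by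
        rw [← hdd']; ring
      rw [h2] at h1
      have h3 : (2 ^ (e + 1) * m) * m < (d * d) * m := by
        calc (2 ^ (e + 1) * m) * m < m * (d * d) := h1
          _ = (d * d) * m := by ring
      exact lt_of_mul_lt_mul_right h3 (le_of_lt hm0)
    · intro h
      have h1 : (2 ^ (e + 1) * m) * (d' * d') < (d * d) * (d' * d') :=
        (Nat.mul_lt_mul_right (by positivity)).mpr h
      have h2 : (d * d) * (d' * d') = m * m := by rw [← hdd']; ring
      have h3 : (2 ^ (e + 1) * m) * (d' * d') = (2 ^ (e + 1) * (d' * d')) * m := by ring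
      rw [h2, h3] at h1
      exact lt_of_mul_lt_mul_right h1 (Nat.zero_le m)
  constructor
  · rintro ⟨_, hlt⟩ ⟨_, hcs⟩
    have := key.mp hcs
    omega
  · intro h
    refine ⟨hddvd, ?_⟩
    have : ¬ (2 ^ (e + 1) * (d' * d') < m) := fun hh => h ⟨hd'dvd, hh⟩
    rw [key] at this
    omega

lemma spec_ext {A B : Set ℕ} (ho : odds A = odds B) (he : evens A = evens B) : A = B := by
  ext x
  rcases Nat.even_or_odd x with hx | hx
  · constructor <;> intro h
    · have h1 : x ∈ evens A := ⟨h, hx⟩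
      rw [he] at h1; exact h1.1
    · have h1 : x ∈ evens B := ⟨h, hx⟩
      rw [← he] at h1; exact h1.1
  · constructor <;> intro h
    · have h1 : x ∈ odds A := ⟨h, hx⟩
      rw [ho] at h1; exact h1.1
    · have h1 : x ∈ odds B := ⟨h, hx⟩
      rw [← ho] at h1; exact h1.1

lemma sSup_image_mul {A : Set ℕ} (hA : A.Nonempty) (hbdd : BddAbove A) (k : ℕ) :
    sSup ((fun c => k * c) '' A) = k * sSup A := by
  obtain ⟨b, hb⟩ := hbdd
  apply le_antisymm
  · apply csSup_le (hA.image _)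
    rintro x ⟨c, hc, rfl⟩
    exact Nat.mul_le_mul_left k (le_csSup ⟨b, hb⟩ hc)
  · refine le_csSup ⟨k * b, ?_⟩ ⟨sSup A, Nat.sSup_mem hA ⟨b, hb⟩, rfl⟩
    rintro x ⟨c, hc, rfl⟩
    exact Nat.mul_le_mul_left k (hb hc)

lemma CS_eq_S1_of_balanced {e m : ℕ} (hm : Odd m)
    (hbal : balancedSet (lspec (2 ^ e * m))) : CS e m = S1 e m := by
  have hm0 : 0 < m := hm.pos
  have hinj : Function.Injective (fun c : ℕ => 2 ^ (e + 1) * c) := fun x y h => by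
    have : (2:ℕ) ^ (e + 1) * x = 2 ^ (e + 1) * y := h
    exact Nat.eq_of_mul_eq_mul_left (by positivity) this
  have h1 : (evens (lspec (2 ^ e * m))).encard = (CS e m).encard := by
    rw [evens_lspec hm]; exact hinj.encard_image _
  have h2 : (odds (lspec (2 ^ e * m))).encard = (S1 e m).encard := by
    rw [odds_lspec hm]
  unfold balancedSet at hbal
  rw [h1, h2] at hbal
  exact (S1_finite e m hm0).eq_of_subset_of_encard_le' CS_subset_S1 hbal.ge


/-! ### unmixed case -/

lemma CS_empty_iff {e m : ℕ} (hm0 : 0 < m) : CS e m = ∅ ↔ m ≤ 2 ^ (e + 1) := by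
  constructor
  · intro h
    by_contra hc
    push_neg at hc
    have h1 : (1:ℕ) ∈ CS e m := ⟨one_dvd m, by simpa using hc⟩
    rw [h] at h1
    exact h1
  · intro h
    ext c
    simp only [CS, Set.mem_setOf_eq, Set.mem_empty_iff_false, iff_false, not_and]
    intro hc
    have hc1 : 1 ≤ c := Nat.pos_of_dvd_of_pos hc hm0
    have : 2 ^ (e + 1) ≤ 2 ^ (e + 1) * (c * c) :=
      Nat.le_mul_of_pos_right _ (by positivity)
    omega

lemma S1_eq_divisors {e m : ℕ} (hm : Odd m) (h : m ≤ 2 ^ (e + 1)) :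
    S1 e m = {d | d ∣ m} := by
  have hm0 : 0 < m := hm.pos
  ext d
  simp only [S1, Set.mem_setOf_eq, and_iff_left_iff_imp]
  intro hd
  have hdle : d ≤ m := Nat.le_of_dvd hm0 hd
  have h1 : d * d ≤ 2 ^ (e + 1) * m := by
    calc d * d ≤ m * m := Nat.mul_le_mul hdle hdle
      _ ≤ 2 ^ (e + 1) * m := Nat.mul_le_mul_right m h
  have hne : d * d ≠ 2 ^ (e + 1) * m := by
    intro hh
    have hodd : Odd (d * d) := Nat.odd_mul.mpr ⟨odd_of_dvd hm hd, odd_of_dvd hm hd⟩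
    have heven : Even (2 ^ (e + 1) * m) := (Nat.even_pow.mpr ⟨even_two, by omega⟩).mul_right m
    rw [hh] at hodd
    exact (Nat.not_odd_iff_even.mpr heven) hodd
  omega

lemma lspec_unmixed_eq {e k m : ℕ} (hm : Odd m) (h : m ≤ 2 ^ (e + 1)) (hek : e ≤ k) :
    lspec (2 ^ k * m) = lspec (2 ^ e * m) := by
  have hm0 : 0 < m := hm.pos
  have hk : m ≤ 2 ^ (k + 1) := le_trans h (Nat.pow_le_pow_right (by norm_num) (by omega))
  apply spec_ext
  · rw [odds_lspec hm, odds_lspec hm, S1_eq_divisors hm hk, S1_eq_divisors hm h]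
  · rw [evens_lspec hm, evens_lspec hm, (CS_empty_iff hm0).mpr hk, (CS_empty_iff hm0).mpr h]
    simp

/-! ### equal spectra: shared data -/

lemma e_eq_of_spec_eq {e m e' m' : ℕ} (hm : Odd m) (hm' : Odd m')
    (hspec : lspec (2 ^ e' * m') = lspec (2 ^ e * m))
    (hmix : 2 ^ (e + 1) < m) : e' = e ∧ S1 e m' = S1 e m ∧ CS e m' = CS e m := by
  have hm0 : 0 < m := hm.pos
  have hm'0 : 0 < m' := hm'.pos
  have hev : (fun c => 2 ^ (e' + 1) * c) '' CS e' m' = (fun c => 2 ^ (e + 1) * c) '' CS e m := by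
    rw [← evens_lspec hm', ← evens_lspec hm, hspec]
  have h1 : (1:ℕ) ∈ CS e m := ⟨one_dvd m, by simpa using hmix⟩
  -- 2^(e+1) ∈ evens, so 2^(e+1) = 2^(e'+1) * c
  have h2 : (2:ℕ) ^ (e + 1) ∈ (fun c => 2 ^ (e' + 1) * c) '' CS e' m' := by
    rw [hev]; exact ⟨1, h1, by simp⟩
  obtain ⟨c, hc, hc2⟩ := h2
  have hc0 : 0 < c := Nat.pos_of_dvd_of_pos hc.1 hm'0
  have hdvd1 : 2 ^ (e' + 1) ∣ 2 ^ (e + 1) := Dvd.intro c hc2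
  have he'le : e' + 1 ≤ e + 1 := (Nat.pow_dvd_pow_iff_le_right (by norm_num)).mp hdvd1
  -- CS e' m' nonempty, so 2^(e'+1) < m', so 1 ∈ CS e' m', so 2^(e'+1) ∈ evens
  have hmix' : 2 ^ (e' + 1) < m' := by
    have : 2 ^ (e' + 1) * (c * c) < m' := hc.2
    have h3 : 2 ^ (e' + 1) ≤ 2 ^ (e' + 1) * (c * c) := Nat.le_mul_of_pos_right _ (by positivity)
    omega
  have h1' : (1:ℕ) ∈ CS e' m' := ⟨one_dvd m', by simpa using hmix'⟩
  have h2' : (2:ℕ) ^ (e' + 1) ∈ (fun c => 2 ^ (e + 1) * c) '' CS e m := by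
    rw [← hev]; exact ⟨1, h1', by simp⟩
  obtain ⟨c', _, hc2'⟩ := h2'
  have hdvd2 : 2 ^ (e + 1) ∣ 2 ^ (e' + 1) := Dvd.intro c' hc2'
  have hele : e + 1 ≤ e' + 1 := (Nat.pow_dvd_pow_iff_le_right (by norm_num)).mp hdvd2
  have hee : e' = e := by omega
  subst hee
  refine ⟨rfl, ?_, ?_⟩
  · rw [← odds_lspec hm', ← odds_lspec hm, hspec]
  · ext x
    constructor
    · intro hcc
      have hmem : (2:ℕ) ^ (e' + 1) * x ∈ (fun c => 2 ^ (e' + 1) * c) '' CS e' m := by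
        rw [← hev]; exact ⟨x, hcc, rfl⟩
      obtain ⟨c₀, hc₀, hc₀2⟩ := hmem
      have hcx : c₀ = x := Nat.eq_of_mul_eq_mul_left (by positivity) hc₀2
      rwa [← hcx]
    · intro hcc
      have hmem : (2:ℕ) ^ (e' + 1) * x ∈ (fun c => 2 ^ (e' + 1) * c) '' CS e' m' := by
        rw [hev]; exact ⟨x, hcc, rfl⟩
      obtain ⟨c₀, hc₀, hc₀2⟩ := hmem
      have hcx : c₀ = x := Nat.eq_of_mul_eq_mul_left (by positivity) hc₀2
      rwa [← hcx]

/-! ### lopsided case: the middle divisors determine m -/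

lemma cofactor_mem_diff {e m z z' : ℕ} (hm : Odd m) (hzz' : z * z' = m)
    (hz : z ∈ S1 e m \ CS e m) : z' ∈ S1 e m \ CS e m := by
  constructor
  · exact (pair_iff hm (by rw [← hzz']; ring)).mpr hz.2
  · exact ((pair_iff hm hzz').mp hz.1)

lemma prod_of_diff {e m : ℕ} (hm : Odd m) (hD : (S1 e m \ CS e m).Nonempty) :
    sSup (S1 e m \ CS e m) * sInf (S1 e m \ CS e m) = m := by
  have hm0 : 0 < m := hm.pos
  set D := S1 e m \ CS e m with hDdef
  have hbdd : BddAbove D := (S1_bdd hm0).mono Set.diff_subset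
  have hx : sSup D ∈ D := Nat.sSup_mem hD hbdd
  have hy : sInf D ∈ D := Nat.sInf_mem hD
  obtain ⟨w, hw⟩ := hy.1.1
  obtain ⟨v, hv⟩ := hx.1.1
  have hwD : w ∈ D := cofactor_mem_diff hm hw.symm hy
  have hvD : v ∈ D := cofactor_mem_diff hm hv.symm hx
  have h1 : m ≤ sSup D * sInf D := by
    calc m = sInf D * w := hw
      _ ≤ sInf D * sSup D := Nat.mul_le_mul_left _ (le_csSup hbdd hwD)
      _ = sSup D * sInf D := by ring
  have h2 : sSup D * sInf D ≤ m := by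
    calc sSup D * sInf D ≤ sSup D * v := Nat.mul_le_mul_left _ (Nat.sInf_le hvD)
      _ = m := hv.symm
  omega


/-- abstract version of the exceptional set -/
def E' (e m : ℕ) : Set ℕ :=
  {a | (∃ b ∈ S1 e m, ∃ c ∈ S1 e m, a = b * c) ∧ 2 ^ (e + 1) * sSup (S1 e m) < a ∧
    {d | d ∣ sSup (S1 e m) * a ∧ d < a} = S1 e m}

lemma two_le_pow (e : ℕ) : 2 ≤ 2 ^ (e + 1) := by
  calc (2:ℕ) = 2 ^ 1 := by norm_num
    _ ≤ 2 ^ (e + 1) := Nat.pow_le_pow_right (by norm_num) (by omega)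

lemma divisors_m1_subset {e m d : ℕ} (hm0 : 0 < m) (hd : d ∣ sSup (S1 e m)) :
    d ∈ S1 e m :=
  S1_dvd_closed hm0 hd (m1_mem hm0)

lemma exists_excess_prime {e m : ℕ} (hm : Odd m)
    (hexc : S1 e m ≠ {d | d ∣ sSup (S1 e m)}) :
    ∃ p k, p.Prime ∧ (sSup (S1 e m)).factorization p < k ∧ p ^ k ∈ S1 e m := by
  have hm0 : 0 < m := hm.pos
  have hsub : {d | d ∣ sSup (S1 e m)} ⊆ S1 e m := fun d hd => divisors_m1_subset hm0 hd
  have hss : {d | d ∣ sSup (S1 e m)} ⊂ S1 e m := ⟨hsub, fun h => hexc (le_antisymm h hsub)⟩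
  obtain ⟨q, hq1, hq2⟩ := Set.exists_of_ssubset hss
  have hq0 : q ≠ 0 := by
    intro h; subst h
    exact absurd (Nat.eq_zero_of_zero_dvd hq1.1) (by omega)
  have hm10 : sSup (S1 e m) ≠ 0 := Nat.pos_iff_ne_zero.mp (m1_pos hm0)
  have hnle : ¬ q.factorization ≤ (sSup (S1 e m)).factorization := by
    intro h
    exact hq2 ((Nat.factorization_le_iff_dvd hq0 hm10).mp h)
  rw [Finsupp.le_def] at hnle
  push_neg at hnle
  obtain ⟨p, hp⟩ := hnle
  have hpne : q.factorization p ≠ 0 := by omega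
  have hpprime : p.Prime := Nat.prime_of_mem_primeFactors
    (by rw [← Nat.support_factorization]; exact Finsupp.mem_support_iff.mpr hpne)
  exact ⟨p, q.factorization p, hpprime, hp, S1_dvd_closed hm0 (Nat.ordProj_dvd q p) hq1⟩

/-- Construction: every element of E' gives a number with the same spectrum. -/
lemma lspec_of_E' {e m a : ℕ} (hm : Odd m) (hCS : CS e m = S1 e m) (ha : a ∈ E' e m) :
    lspec (2 ^ e * (sSup (S1 e m) * a)) = lspec (2 ^ e * m) := by
  have hm0 : 0 < m := hm.pos
  obtain ⟨⟨b, hb, c, hc, habc⟩, hgt, hdiv⟩ := ha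
  set m₁ := sSup (S1 e m) with hm₁def
  have hm₁pos : 0 < m₁ := m1_pos hm0
  have hm₁odd : Odd m₁ := odd_of_dvd hm (m1_mem hm0).1
  have haodd : Odd a := by
    rw [habc]
    exact Nat.odd_mul.mpr ⟨odd_of_dvd hm hb.1, odd_of_dvd hm hc.1⟩
  have hapos : 0 < a := haodd.pos
  have hm'odd : Odd (m₁ * a) := Nat.odd_mul.mpr ⟨hm₁odd, haodd⟩
  have hm₁a : m₁ < a := by
    have : m₁ ≤ 2 ^ (e + 1) * m₁ := Nat.le_mul_of_pos_left _ (by positivity)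
    omega
  -- S1 e (m₁ * a) = S1 e m
  have hS1 : S1 e (m₁ * a) = S1 e m := by
    ext x
    constructor
    · rintro ⟨hxd, hxlt⟩
      have hxa : x < a := by
        by_contra hxa
        push_neg at hxa
        have h1 : 2 ^ (e + 1) * (m₁ * a) = (2 ^ (e + 1) * m₁) * a := by ring
        have h2 : (2 ^ (e + 1) * m₁) * a < a * a :=
          (Nat.mul_lt_mul_right hapos).mpr hgt
        have h3 : a * a ≤ x * x := Nat.mul_le_mul hxa hxa
        omega
      rw [← hdiv]; exact ⟨hxd, hxa⟩
    · intro hx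
      have hx' : x ∣ m₁ * a ∧ x < a := by rw [← hdiv] at hx; exact hx
      refine ⟨hx'.1, ?_⟩
      have hxm₁ : x ≤ m₁ := le_m1 hm0 hx
      have h1 : x * x ≤ m₁ * m₁ := Nat.mul_le_mul hxm₁ hxm₁
      have h2 : m₁ * m₁ < m₁ * a := (Nat.mul_lt_mul_left hm₁pos).mpr hm₁a
      have h3 : m₁ * a ≤ 2 ^ (e + 1) * (m₁ * a) := Nat.le_mul_of_pos_left _ (by positivity)
      omega
  -- CS e (m₁ * a) = S1 e m
  have hCS' : CS e (m₁ * a) = S1 e m := by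
    ext x
    constructor
    · rintro ⟨hxd, hxlt⟩
      have hxa : x < a := by
        by_contra hxa
        push_neg at hxa
        have hx0 : 0 < x := by omega
        have h1 : m₁ * a ≤ m₁ * x := Nat.mul_le_mul_left _ hxa
        have h2 : m₁ * x < a * x := (Nat.mul_lt_mul_right hx0).mpr hm₁a
        have h3 : a * x ≤ x * x := Nat.mul_le_mul_right x hxa
        have h4 : x * x ≤ 2 ^ (e + 1) * (x * x) := Nat.le_mul_of_pos_left _ (by positivity)
        omega
      rw [← hdiv]; exact ⟨hxd, hxa⟩
    · intro hx
      have hx' : x ∣ m₁ * a ∧ x < a := by rw [← hdiv] at hx; exact hx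
      refine ⟨hx'.1, ?_⟩
      have hxm₁ : x ≤ m₁ := le_m1 hm0 hx
      have hx0 : 0 < x := Nat.pos_of_dvd_of_pos hx.1 hm0
      have h1 : 2 ^ (e + 1) * (x * x) ≤ (2 ^ (e + 1) * m₁) * x := by
        calc 2 ^ (e + 1) * (x * x) = (2 ^ (e + 1) * x) * x := by ring
          _ ≤ (2 ^ (e + 1) * m₁) * x :=
            Nat.mul_le_mul_right x (Nat.mul_le_mul_left _ hxm₁)
      have h2 : (2 ^ (e + 1) * m₁) * x < a * x := (Nat.mul_lt_mul_right hx0).mpr hgt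
      have h3 : a * x ≤ a * m₁ := Nat.mul_le_mul_left _ hxm₁
      have h4 : a * m₁ = m₁ * a := by ring
      omega
  apply spec_ext
  · rw [odds_lspec hm'odd, odds_lspec hm, hS1]
  · rw [evens_lspec hm'odd, evens_lspec hm, hCS', hCS]

/-- Forward: every member of the spectral class comes from E'. -/
lemma E'_of_spec_eq {e m m' : ℕ} (hm : Odd m) (hm' : Odd m')
    (hS1 : S1 e m' = S1 e m) (hCSm : CS e m = S1 e m) (hCS : CS e m' = CS e m)
    (hexc : S1 e m ≠ {d | d ∣ sSup (S1 e m)}) :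
    ∃ a ∈ E' e m, m' = sSup (S1 e m) * a := by
  have hm0 : 0 < m := hm.pos
  have hm'0 : 0 < m' := hm'.pos
  set m₁ := sSup (S1 e m) with hm₁def
  have hm₁pos : 0 < m₁ := m1_pos hm0
  have hCS' : CS e m' = S1 e m' := by rw [hCS, hCSm, hS1]
  have hm₁m' : m₁ ∣ m' := by
    have : m₁ ∈ S1 e m' := by rw [hS1]; exact m1_mem hm0
    exact this.1
  obtain ⟨a, ha⟩ := hm₁m'
  -- m₁ ∈ CS e m', so 2^(e+1) * m₁ < a
  have hm₁CS : m₁ ∈ CS e m' := by rw [hCS', hS1]; exact m1_mem hm0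
  have hgt : 2 ^ (e + 1) * m₁ < a := by
    have h1 : 2 ^ (e + 1) * (m₁ * m₁) < m' := hm₁CS.2
    rw [ha] at h1
    have h2 : m₁ * (2 ^ (e + 1) * m₁) < m₁ * a := by
      calc m₁ * (2 ^ (e + 1) * m₁) = 2 ^ (e + 1) * (m₁ * m₁) := by ring
        _ < m₁ * a := h1
    exact lt_of_mul_lt_mul_left h2 (Nat.zero_le m₁)
  have hapos : 0 < a := by
    rcases Nat.eq_zero_or_pos a with h | h
    · exfalso; subst h; simp at ha; omega
    · exact h
  have hm₁a : m₁ < a := by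
    have : m₁ ≤ 2 ^ (e + 1) * m₁ := Nat.le_mul_of_pos_left _ (by positivity)
    omega
  -- divisor condition
  have hdiv : {d | d ∣ m₁ * a ∧ d < a} = S1 e m := by
    ext d
    constructor
    · rintro ⟨hdd, hda⟩
      rw [← ha] at hdd
      by_contra hdS
      have hdS' : d ∉ S1 e m' := by rw [hS1]; exact hdS
      obtain ⟨w, hw⟩ := hdd
      have hwCS : w ∈ CS e m' := by
        by_contra hcon
        exact hdS' ((pair_iff hm' hw.symm).mpr hcon)
      have hwle : w ≤ m₁ := by
        have hwS : w ∈ S1 e m := by rw [← hCSm, ← hCS]; exact hwCS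
        exact le_m1 hm0 hwS
      have h3 : m₁ * a ≤ m₁ * d := by
        calc m₁ * a = d * w := by rw [← ha, hw]
          _ ≤ d * m₁ := Nat.mul_le_mul_left _ hwle
          _ = m₁ * d := by ring
      have h4 : a ≤ d := Nat.le_of_mul_le_mul_left h3 hm₁pos
      omega
    · intro hd
      have hd' : d ∈ S1 e m' := by rw [hS1]; exact hd
      refine ⟨by rw [← ha]; exact hd'.1, ?_⟩
      have : d ≤ m₁ := le_m1 hm0 hd
      omega
  -- the product decomposition of a
  have h2a : 2 ≤ a := by
    have h2 : 2 ≤ 2 ^ (e + 1) := two_le_pow e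
    have : 2 ^ (e + 1) * m₁ ≥ 2 * 1 := Nat.mul_le_mul h2 hm₁pos
    omega
  have hprod : ∃ b ∈ S1 e m, ∃ c ∈ S1 e m, a = b * c := by
    by_cases hap : a.Prime
    · exfalso
      obtain ⟨p, k, hp, hk, hpk⟩ := exists_excess_prime hm hexc
      have hpkdvd : p ^ k ∣ m₁ * a ∧ p ^ k < a := by rw [← hdiv] at hpk; exact hpk
      have ha0 : a ≠ 0 := by omega
      have hm₁0 : m₁ ≠ 0 := by omega
      have hkle : k ≤ (m₁ * a).factorization p :=
        (Nat.Prime.pow_dvd_iff_le_factorization hp (mul_ne_zero hm₁0 ha0)).mp hpkdvd.1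
      rw [Nat.factorization_mul hm₁0 ha0] at hkle
      simp only [Finsupp.add_apply] at hkle
      have hk' : m₁.factorization p < k := hk
      have hpa : p ∣ a := by
        have := (Nat.Prime.pow_dvd_iff_le_factorization (k := 1) hp ha0).mpr (by omega)
        simpa using this
      have hpeq : p = a := (Nat.prime_dvd_prime_iff_eq hp hap).mp hpa
      have hple : p ≤ p ^ k := Nat.le_self_pow (by omega) p
      omega
    · obtain ⟨b, hbdvd, hb2, hblt⟩ := Nat.exists_dvd_of_not_prime2 h2a hap
      obtain ⟨c, hc⟩ := hbdvd
      have hcpos : 0 < c := by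
        rcases Nat.eq_zero_or_pos c with h | h
        · exfalso; subst h; simp at hc; omega
        · exact h
      have hclt : c < a := by
        have : 2 * c ≤ b * c := Nat.mul_le_mul_right c hb2
        omega
      have hbS : b ∈ S1 e m := by
        rw [← hdiv]
        exact ⟨dvd_mul_of_dvd_right (Dvd.intro c hc.symm) m₁, hblt⟩
      have hcS : c ∈ S1 e m := by
        rw [← hdiv]
        exact ⟨dvd_mul_of_dvd_right (Dvd.intro_left b hc.symm) m₁, hclt⟩
      exact ⟨b, hbS, c, hcS, hc⟩
  exact ⟨a, ⟨hprod, hgt, hdiv⟩, ha⟩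


/-- any excess prime divides each `a ∈ E'`, and `a ≤ m₁ * p`. -/
lemma E'_upper {e m a p k : ℕ} (hm0 : 0 < m) (ha : a ∈ E' e m)
    (hp : p.Prime) (hk : (sSup (S1 e m)).factorization p < k) (hpk : p ^ k ∈ S1 e m) :
    p ∣ a ∧ a ≤ sSup (S1 e m) * p := by
  obtain ⟨-, hgt, hdiv⟩ := ha
  have hm₁pos : 0 < sSup (S1 e m) := m1_pos hm0
  have hm₁le : sSup (S1 e m) ≤ 2 ^ (e + 1) * sSup (S1 e m) :=
    Nat.le_mul_of_pos_left _ (by positivity)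
  have hapos : 0 < a := by omega
  have ha0 : a ≠ 0 := by omega
  have hm₁0 : sSup (S1 e m) ≠ 0 := by omega
  have hpkdvd : p ^ k ∣ sSup (S1 e m) * a ∧ p ^ k < a := by rw [← hdiv] at hpk; exact hpk
  have hkle : k ≤ (sSup (S1 e m) * a).factorization p :=
    (Nat.Prime.pow_dvd_iff_le_factorization hp (mul_ne_zero hm₁0 ha0)).mp hpkdvd.1
  rw [Nat.factorization_mul hm₁0 ha0] at hkle
  simp only [Finsupp.add_apply] at hkle
  have hpa : p ∣ a := by
    have := (Nat.Prime.pow_dvd_iff_le_factorization (k := 1) hp ha0).mpr (by omega)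
    simpa using this
  refine ⟨hpa, ?_⟩
  by_contra hcon
  push_neg at hcon
  have hmem : sSup (S1 e m) * p ∈ {d | d ∣ sSup (S1 e m) * a ∧ d < a} :=
    ⟨mul_dvd_mul_left _ hpa, hcon⟩
  rw [hdiv] at hmem
  have h1 : sSup (S1 e m) * p ≤ sSup (S1 e m) := le_m1 hm0 hmem
  have h2 : sSup (S1 e m) * 2 ≤ sSup (S1 e m) * p := Nat.mul_le_mul_left _ hp.two_le
  omega

/-- if `a < a'` are both in E', then `a` is a power of any excess prime. -/
lemma E'_small_is_pow {e m a a' p k : ℕ} (hm0 : 0 < m) (ha : a ∈ E' e m) (ha' : a' ∈ E' e m)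
    (haa' : a < a') (hp : p.Prime) (hk : (sSup (S1 e m)).factorization p < k)
    (hpk : p ^ k ∈ S1 e m) : a = p ^ (a.factorization p) := by
  have hup := E'_upper hm0 ha hp hk hpk
  obtain ⟨-, hgt, hdiv⟩ := ha
  obtain ⟨-, hgt', hdiv'⟩ := ha'
  have hm₁pos : 0 < sSup (S1 e m) := m1_pos hm0
  have hm₁le : sSup (S1 e m) ≤ 2 ^ (e + 1) * sSup (S1 e m) := Nat.le_mul_of_pos_left _ (by positivity)
  have hapos : 0 < a := by omega
  have ha0 : a ≠ 0 := by omega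
  obtain ⟨v, u, hu, hvdef, hudef⟩ :
      ∃ v u, p ^ v * u = a ∧ v = a.factorization p ∧ u = ordCompl[p] a :=
    ⟨a.factorization p, ordCompl[p] a, Nat.ordProj_mul_ordCompl_eq_self a p, rfl, rfl⟩
  have hpu : ¬ p ∣ u := by rw [hudef]; exact Nat.not_dvd_ordCompl hp ha0
  have hv1 : 1 ≤ v := by
    rw [hvdef]; exact (Nat.Prime.dvd_iff_one_le_factorization hp ha0).mp hup.1
  rw [← hvdef]
  by_contra hne
  have hupos : 0 < u := by rw [hudef]; exact Nat.ordCompl_pos p ha0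
  have hune : u ≠ 1 := by
    intro h1
    rw [h1, mul_one] at hu
    exact hne hu.symm
  have hu2 : 2 ≤ u := by omega
  have hpv2 : 2 ≤ p ^ v := by
    calc 2 ≤ p := hp.two_le
      _ = p ^ 1 := (pow_one p).symm
      _ ≤ p ^ v := Nat.pow_le_pow_right hp.pos hv1
  have hpvlt : p ^ v < a := by
    have h := (Nat.mul_lt_mul_left (show 0 < p ^ v by positivity)).mpr (show 1 < u by omega)
    rw [mul_one, hu] at h
    exact h
  have hult : u < a := by
    have h := (Nat.mul_lt_mul_right (show 0 < u by omega)).mpr (show 1 < p ^ v by omega)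
    rw [one_mul, hu] at h
    exact h
  have hpvS : p ^ v ∈ S1 e m := by
    have h : p ^ v ∈ {d | d ∣ sSup (S1 e m) * a ∧ d < a} :=
      ⟨dvd_mul_of_dvd_right ⟨u, hu.symm⟩ _, hpvlt⟩
    rw [hdiv] at h; exact h
  have huS : u ∈ S1 e m := by
    have h : u ∈ {d | d ∣ sSup (S1 e m) * a ∧ d < a} :=
      ⟨dvd_mul_of_dvd_right ⟨p ^ v, by rw [← hu]; ring⟩ _, hult⟩
    rw [hdiv] at h; exact h
  -- both divide m₁ * a' ; they are coprime, so a ∣ m₁ * a'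
  have hpv' : p ^ v ∣ sSup (S1 e m) * a' ∧ p ^ v < a' := by rw [← hdiv'] at hpvS; exact hpvS
  have hu' : u ∣ sSup (S1 e m) * a' ∧ u < a' := by rw [← hdiv'] at huS; exact huS
  have hcop : Nat.Coprime (p ^ v) u := Nat.Coprime.pow_left _ ((hp.coprime_iff_not_dvd).mpr hpu)
  have hadvd : a ∣ sSup (S1 e m) * a' := hu ▸ hcop.mul_dvd_of_dvd_of_dvd hpv'.1 hu'.1
  have haS : a ∈ S1 e m := by
    have h : a ∈ {d | d ∣ sSup (S1 e m) * a' ∧ d < a'} := ⟨hadvd, haa'⟩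
    rw [hdiv'] at h; exact h
  have : a ≤ sSup (S1 e m) := le_m1 hm0 haS
  have h2 : sSup (S1 e m) * 2 ≤ sSup (S1 e m) * 2 ^ (e + 1) := Nat.mul_le_mul_left _ (two_le_pow e)
  omega

lemma E'_encard_le_two {e m p k : ℕ} (hm0 : 0 < m)
    (hp : p.Prime) (hk : (sSup (S1 e m)).factorization p < k) (hpk : p ^ k ∈ S1 e m) :
    (E' e m).encard ≤ 2 := by
  rcases (E' e m).eq_empty_or_nonempty with hE | hE
  · rw [hE]; simp
  have hm₁pos : 0 < sSup (S1 e m) := m1_pos hm0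
  have hbdd : BddAbove (E' e m) := by
    refine ⟨sSup (S1 e m) * sSup (S1 e m), ?_⟩
    rintro a ⟨⟨b, hb, c, hc, rfl⟩, -, -⟩
    exact Nat.mul_le_mul (le_m1 hm0 hb) (le_m1 hm0 hc)
  set x := sInf (E' e m) with hxdef
  set y := sSup (E' e m) with hydef
  have hxE : x ∈ E' e m := Nat.sInf_mem hE
  have hyE : y ∈ E' e m := Nat.sSup_mem hE hbdd
  have hsub : E' e m ⊆ {x, y} := by
    intro z hz
    by_contra hzxy
    simp only [Set.mem_insert_iff, Set.mem_singleton_iff] at hzxy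
    push_neg at hzxy
    obtain ⟨hzx, hzy⟩ := hzxy
    have hxz : x < z := lt_of_le_of_ne (Nat.sInf_le hz) (Ne.symm hzx)
    have hzyl : z < y := lt_of_le_of_ne (le_csSup hbdd hz) hzy
    have hxy : x < y := lt_trans hxz hzyl
    have hxeq : x = p ^ (x.factorization p) := E'_small_is_pow hm0 hxE hyE hxy hp hk hpk
    have hzeq : z = p ^ (z.factorization p) := E'_small_is_pow hm0 hz hyE hzyl hp hk hpk
    have hvlt : x.factorization p < z.factorization p := by
      by_contra hcon
      push_neg at hcon
      have : p ^ (z.factorization p) ≤ p ^ (x.factorization p) :=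
        Nat.pow_le_pow_right (by have := hp.two_le; omega) hcon
      omega
    have hzbig : p * x ≤ z := by
      calc p * x = p ^ 1 * p ^ (x.factorization p) := by rw [pow_one, ← hxeq]
        _ = p ^ (1 + x.factorization p) := by rw [pow_add]
        _ ≤ p ^ (z.factorization p) := Nat.pow_le_pow_right (by have := hp.two_le; omega)
            (by omega)
        _ = z := hzeq.symm
    -- but z ≤ m₁ * p and x > m₁, so p * x > p * m₁ ≥ z : contradiction
    have hzup := (E'_upper hm0 hz hp hk hpk).2
    have hxgt : sSup (S1 e m) < x := by
      obtain ⟨-, hgt, -⟩ := hxE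
      have : sSup (S1 e m) ≤ 2 ^ (e + 1) * sSup (S1 e m) :=
        Nat.le_mul_of_pos_left _ (by positivity)
      omega
    have : p * sSup (S1 e m) < p * x := (Nat.mul_lt_mul_left hp.pos).mpr hxgt
    have hrw : sSup (S1 e m) * p = p * sSup (S1 e m) := by ring
    omega
  calc (E' e m).encard ≤ ({x, y} : Set ℕ).encard := Set.encard_mono hsub
    _ ≤ ({y} : Set ℕ).encard + 1 := Set.encard_insert_le _ _
    _ = 2 := by rw [Set.encard_singleton]; rfl


lemma dvd_mul_prime {M p d : ℕ} (hp : p.Prime) (hM : 0 < M) (hd : d ∣ M * p) :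
    d ∣ M ∨ ∃ d₁, d₁ ∣ M ∧ d = d₁ * p := by
  by_cases hpd : p ∣ d
  · right
    obtain ⟨d₁, rfl⟩ := hpd
    refine ⟨d₁, ?_, by ring⟩
    have h1 : p * d₁ ∣ p * M := by
      have : M * p = p * M := by ring
      rwa [this] at hd
    exact (mul_dvd_mul_iff_left (a := p) (by have := hp.two_le; omega)).mp h1
  · left
    have hcop : Nat.Coprime d p :=
      Nat.coprime_comm.mp ((Nat.Prime.coprime_iff_not_dvd hp).mpr hpd)
    exact (Nat.Coprime.dvd_mul_right hcop).mp hd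


lemma lspec_prime_mul {e m p : ℕ} (hm : Odd m)
    (hNE : S1 e m = {d | d ∣ sSup (S1 e m)}) (hCS : CS e m = S1 e m)
    (hp : p.Prime) (hbig : 2 ^ (e + 1) * (sSup (S1 e m) * sSup (S1 e m)) < p) :
    lspec (2 ^ e * (sSup (S1 e m) * p)) = lspec (2 ^ e * m) := by
  have hm0 : 0 < m := hm.pos
  have hMpos : 0 < sSup (S1 e m) := m1_pos hm0
  obtain ⟨M, hMdef⟩ : ∃ M, M = sSup (S1 e m) := ⟨_, rfl⟩
  rw [← hMdef] at hNE hbig ⊢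
  have hMpos : 0 < M := hMdef ▸ hMpos
  have hModd : Odd M := by
    rw [hMdef]; exact odd_of_dvd hm (m1_mem hm0).1
  have h2e : 2 ≤ 2 ^ (e + 1) := two_le_pow e
  have hMM : M ≤ M * M := Nat.le_mul_of_pos_left _ hMpos
  have hMM2 : M * M ≤ 2 ^ (e + 1) * (M * M) := Nat.le_mul_of_pos_left _ (by positivity)
  have hpM : M < p := by omega
  have hp2 : 2 < p := by
    have : 2 * 1 ≤ 2 ^ (e + 1) * (M * M) := Nat.mul_le_mul h2e (Nat.mul_pos hMpos hMpos)
    omega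
  have hpodd : Odd p := hp.odd_of_ne_two (by omega)
  have hMp : Odd (M * p) := Nat.odd_mul.mpr ⟨hModd, hpodd⟩
  have hpbig : 2 ^ (e + 1) * M < p := by
    have : 2 ^ (e + 1) * M ≤ 2 ^ (e + 1) * (M * M) := Nat.mul_le_mul_left _ hMM
    omega
  have hS1new : S1 e (M * p) = {d | d ∣ M} := by
    ext d
    constructor
    · rintro ⟨hd, hlt⟩
      rcases dvd_mul_prime hp hMpos hd with h | ⟨d₁, hd₁, rfl⟩
      · exact h
      · exfalso
        have hd₁pos : 0 < d₁ := Nat.pos_of_dvd_of_pos hd₁ hMpos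
        have h1 : p ≤ d₁ * p := Nat.le_mul_of_pos_left _ hd₁pos
        have h2 : (2 ^ (e + 1) * M) * p < p * p :=
          (Nat.mul_lt_mul_right (by omega)).mpr hpbig
        have h3 : p * p ≤ (d₁ * p) * (d₁ * p) := Nat.mul_le_mul h1 h1
        have h4 : 2 ^ (e + 1) * (M * p) = (2 ^ (e + 1) * M) * p := by ring
        omega
    · intro hd
      have hdM : d ≤ M := Nat.le_of_dvd hMpos hd
      refine ⟨dvd_mul_of_dvd_left hd p, ?_⟩
      have h1 : d * d ≤ M * M := Nat.mul_le_mul hdM hdM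
      have h2 : p ≤ M * p := Nat.le_mul_of_pos_left _ hMpos
      have h3 : M * p ≤ 2 ^ (e + 1) * (M * p) := Nat.le_mul_of_pos_left _ (by positivity)
      omega
  have hCSnew : CS e (M * p) = {d | d ∣ M} := by
    ext d
    constructor
    · rintro ⟨hd, hlt⟩
      rcases dvd_mul_prime hp hMpos hd with h | ⟨d₁, hd₁, rfl⟩
      · exact h
      · exfalso
        have hd₁pos : 0 < d₁ := Nat.pos_of_dvd_of_pos hd₁ hMpos
        have h1 : p ≤ d₁ * p := Nat.le_mul_of_pos_left _ hd₁pos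
        have h2 : M * p < p * p := (Nat.mul_lt_mul_right (by omega)).mpr hpM
        have h3 : p * p ≤ (d₁ * p) * (d₁ * p) := Nat.mul_le_mul h1 h1
        have h4 : (d₁ * p) * (d₁ * p) ≤ 2 ^ (e + 1) * ((d₁ * p) * (d₁ * p)) :=
          Nat.le_mul_of_pos_left _ (by positivity)
        omega
    · intro hd
      have hdM : d ≤ M := Nat.le_of_dvd hMpos hd
      refine ⟨dvd_mul_of_dvd_left hd p, ?_⟩
      have h1 : 2 ^ (e + 1) * (d * d) ≤ 2 ^ (e + 1) * (M * M) :=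
        Nat.mul_le_mul_left _ (Nat.mul_le_mul hdM hdM)
      have h2 : p ≤ M * p := Nat.le_mul_of_pos_left _ hMpos
      omega
  apply spec_ext
  · rw [odds_lspec hMp, odds_lspec hm, hS1new, hNE, hMdef]
  · rw [evens_lspec hMp, evens_lspec hm, hCSnew, hCS, hNE, hMdef]


lemma decomp {n : ℕ} (hn : 0 < n) : ∃ e m, Odd m ∧ n = 2 ^ e * m := by
  obtain ⟨e, m, hdvd, heq⟩ :=
    Nat.exists_eq_pow_mul_and_not_dvd (Nat.pos_iff_ne_zero.mp hn) 2 (by norm_num)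
  exact ⟨e, m, Nat.odd_iff.mpr (by omega), heq⟩

lemma top_ne_one' : (⊤ : ℕ∞) ≠ 1 := by simp
lemma top_ne_two' : (⊤ : ℕ∞) ≠ 2 := by simp
lemma one_ne_two' : (1 : ℕ∞) ≠ 2 := by decide
lemma top_not_le_two' : ¬ ((⊤ : ℕ∞) ≤ 2) := by simp

end SpecAux

/-- Every spectral class has `1`, `2` or infinitely many elements; moreover the three
possibilities are characterized by the type of the spectrum. -/
theorem specClass_trichotomy (n : ℕ) (hn : 0 < n) :
    ((specClass n).encard = 1 ∨ (specClass n).encard = 2 ∨ (specClass n).Infinite) ∧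
    ((specClass n).encard = 1 ↔
      (lopsidedSet (lspec n) ∨
        (balancedSet (lspec n) ∧ ¬ nonExcessive (lspec n) ∧
          (excSet (lspec n)).encard = 1))) ∧
    ((specClass n).encard = 2 ↔
      (balancedSet (lspec n) ∧ ¬ nonExcessive (lspec n) ∧
        (excSet (lspec n)).encard = 2)) ∧
    ((specClass n).Infinite ↔
      (unmixedSet (lspec n) ∨ (balancedSet (lspec n) ∧ nonExcessive (lspec n)))) := by
  obtain ⟨e, m, hm, rfl⟩ := SpecAux.decomp hn
  have hm0 : 0 < m := hm.pos
  have hodds := SpecAux.odds_lspec (e := e) hm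
  have hevens := SpecAux.evens_lspec (e := e) hm
  have hinj : Function.Injective (fun c : ℕ => 2 ^ (e + 1) * c) := fun x y h =>
    Nat.eq_of_mul_eq_mul_left (by positivity) h
  have hbal_iff : balancedSet (lspec (2 ^ e * m)) ↔
      (SpecAux.CS e m).encard = (SpecAux.S1 e m).encard := by
    unfold balancedSet
    rw [hevens, hodds, hinj.encard_image]
  have hone : (1:ℕ) ∈ SpecAux.S1 e m := SpecAux.one_mem_S1 hm0
  by_cases hU : unmixedSet (lspec (2 ^ e * m))
  · -- unmixed case: infinitely many
    have hCSempty : SpecAux.CS e m = ∅ := by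
      have h := hU
      unfold unmixedSet at h
      rw [hevens] at h
      exact Set.image_eq_empty.mp h
    have hle : m ≤ 2 ^ (e + 1) := (SpecAux.CS_empty_iff hm0).mp hCSempty
    have hNB : ¬ balancedSet (lspec (2 ^ e * m)) := by
      intro hbal
      rw [hbal_iff, hCSempty] at hbal
      have h0 : (SpecAux.S1 e m).encard = 0 := by rw [← hbal]; simp
      rw [Set.encard_eq_zero] at h0
      rw [h0] at hone
      exact hone
    have hInf : (specClass (2 ^ e * m)).Infinite := by
      apply Set.infinite_of_injective_forall_mem (f := fun i : ℕ => 2 ^ (e + i) * m)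
      · intro i j hij
        have h1 : 2 ^ (e + i) * m = 2 ^ (e + j) * m := hij
        have h2 : (2:ℕ) ^ (e + i) = 2 ^ (e + j) := Nat.eq_of_mul_eq_mul_right hm0 h1
        have h3 := Nat.pow_right_injective (le_refl 2) h2
        omega
      · intro i
        exact ⟨by positivity, SpecAux.lspec_unmixed_eq hm hle (by omega)⟩
    refine ⟨Or.inr (Or.inr hInf), ?_, ?_, ?_⟩
    · rw [hInf.encard_eq]
      constructor
      · intro h; exact absurd h SpecAux.top_ne_one'
      · rintro (⟨_, hnu⟩ | ⟨hbal, _, _⟩)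
        · exact absurd hU hnu
        · exact absurd hbal hNB
    · rw [hInf.encard_eq]
      constructor
      · intro h; exact absurd h SpecAux.top_ne_two'
      · rintro ⟨hbal, _, _⟩; exact absurd hbal hNB
    · exact ⟨fun _ => Or.inl hU, fun _ => hInf⟩
  · by_cases hB : balancedSet (lspec (2 ^ e * m))
    · have hCS : SpecAux.CS e m = SpecAux.S1 e m := SpecAux.CS_eq_S1_of_balanced hm hB
      by_cases hNE : nonExcessive (lspec (2 ^ e * m))
      · -- balanced non-excessive: infinitely many
        have hNEs : SpecAux.S1 e m = {d | d ∣ sSup (SpecAux.S1 e m)} := by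
          have h := hNE
          unfold nonExcessive at h
          rw [hodds] at h
          exact h
        have hInf : (specClass (2 ^ e * m)).Infinite := by
          apply Set.infinite_of_not_bddAbove
          rintro ⟨b, hb⟩
          obtain ⟨p, hpge, hp⟩ := Nat.exists_infinite_primes
            (2 ^ (e + 1) * (sSup (SpecAux.S1 e m) * sSup (SpecAux.S1 e m)) + b + 1)
          have hmem : 2 ^ e * (sSup (SpecAux.S1 e m) * p) ∈ specClass (2 ^ e * m) := by
            refine ⟨Nat.mul_pos (by positivity)
              (Nat.mul_pos (SpecAux.m1_pos hm0) hp.pos), ?_⟩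
            exact SpecAux.lspec_prime_mul hm hNEs hCS hp (by omega)
          have hle' := hb hmem
          have hple : p ≤ 2 ^ e * (sSup (SpecAux.S1 e m) * p) := by
            calc p ≤ sSup (SpecAux.S1 e m) * p :=
                  Nat.le_mul_of_pos_left _ (SpecAux.m1_pos hm0)
              _ ≤ 2 ^ e * (sSup (SpecAux.S1 e m) * p) :=
                  Nat.le_mul_of_pos_left _ (by positivity)
          omega
        refine ⟨Or.inr (Or.inr hInf), ?_, ?_, ?_⟩
        · rw [hInf.encard_eq]
          constructor
          · intro h; exact absurd h SpecAux.top_ne_one'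
          · rintro (⟨hnb, _⟩ | ⟨_, hne, _⟩)
            · exact absurd hB hnb
            · exact absurd hNE hne
        · rw [hInf.encard_eq]
          constructor
          · intro h; exact absurd h SpecAux.top_ne_two'
          · rintro ⟨_, hne, _⟩; exact absurd hNE hne
        · exact ⟨fun _ => Or.inr ⟨hB, hNE⟩, fun _ => hInf⟩
      · -- balanced excessive: 1 or 2, counted by E
        have hexc : SpecAux.S1 e m ≠ {d | d ∣ sSup (SpecAux.S1 e m)} := by
          intro h
          apply hNE
          unfold nonExcessive
          rw [hodds]
          exact h
        have hsupevens : sSup (evens (lspec (2 ^ e * m)))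
            = 2 ^ (e + 1) * sSup (SpecAux.S1 e m) := by
          rw [hevens, hCS]
          exact SpecAux.sSup_image_mul ⟨1, hone⟩ (SpecAux.S1_bdd hm0) _
        have hEeq : excSet (lspec (2 ^ e * m)) = SpecAux.E' e m := by
          unfold excSet SpecAux.E'
          rw [hsupevens, hodds]
        obtain ⟨p, k, hp, hk, hpk⟩ := SpecAux.exists_excess_prime hm hexc
        have hEle2 : (SpecAux.E' e m).encard ≤ 2 := SpecAux.E'_encard_le_two hm0 hp hk hpk
        have hmix : 2 ^ (e + 1) < m := by
          have h1 : (1:ℕ) ∈ SpecAux.CS e m := by rw [hCS]; exact hone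
          have h2 := h1.2
          simpa using h2
        have himg : specClass (2 ^ e * m)
            = (fun a => 2 ^ e * (sSup (SpecAux.S1 e m) * a)) '' SpecAux.E' e m := by
          ext n'
          constructor
          · rintro ⟨hn', hspec⟩
            obtain ⟨e', m', hm', rfl⟩ := SpecAux.decomp hn'
            obtain ⟨hee, hS1, hCS'⟩ := SpecAux.e_eq_of_spec_eq hm hm' hspec hmix
            obtain ⟨a, haE, haeq⟩ := SpecAux.E'_of_spec_eq hm hm' hS1 hCS hCS' hexc
            exact ⟨a, haE, by rw [hee, haeq]⟩
          · rintro ⟨a, haE, rfl⟩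
            have hapos : 0 < a := by
              have h1 := haE.2.1
              omega
            refine ⟨Nat.mul_pos (by positivity)
              (Nat.mul_pos (SpecAux.m1_pos hm0) hapos), ?_⟩
            exact SpecAux.lspec_of_E' hm hCS haE
        have hinj2 : Function.Injective
            (fun a : ℕ => 2 ^ e * (sSup (SpecAux.S1 e m) * a)) := by
          intro x y hxy
          simp only at hxy
          have h2 := Nat.eq_of_mul_eq_mul_left (show 0 < 2 ^ e by positivity) hxy
          exact Nat.eq_of_mul_eq_mul_left (SpecAux.m1_pos hm0) h2
        have hcard : (specClass (2 ^ e * m)).encard = (SpecAux.E' e m).encard := by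
          rw [himg]
          exact hinj2.encard_image _
        have hEne : (SpecAux.E' e m).Nonempty := by
          have hself : 2 ^ e * m ∈ specClass (2 ^ e * m) := ⟨by positivity, rfl⟩
          rw [himg] at hself
          obtain ⟨a, haE, -⟩ := hself
          exact ⟨a, haE⟩
        have h1le : 1 ≤ (SpecAux.E' e m).encard :=
          Set.one_le_encard_iff_nonempty.mpr hEne
        have hnetop : (SpecAux.E' e m).encard ≠ ⊤ := by
          intro h
          rw [h] at hEle2
          exact SpecAux.top_not_le_two' hEle2
        have h12 : (SpecAux.E' e m).encard = 1 ∨ (SpecAux.E' e m).encard = 2 := by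
          rcases eq_or_lt_of_le h1le with h | h
          · exact Or.inl h.symm
          · right
            refine le_antisymm hEle2 ?_
            have h2 := Order.add_one_le_of_lt h
            calc (2:ℕ∞) = 1 + 1 := by norm_num
              _ ≤ (SpecAux.E' e m).encard := h2
        have hfin : ¬ (specClass (2 ^ e * m)).Infinite := by
          intro h
          rw [← Set.encard_eq_top_iff, hcard] at h
          exact hnetop h
        refine ⟨?_, ?_, ?_, ?_⟩
        · rcases h12 with h | h
          · exact Or.inl (by rw [hcard, h])
          · exact Or.inr (Or.inl (by rw [hcard, h]))
        · rw [hcard, hEeq]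
          constructor
          · intro h; exact Or.inr ⟨hB, hNE, h⟩
          · rintro (⟨hnb, _⟩ | ⟨_, _, h⟩)
            · exact absurd hB hnb
            · exact h
        · rw [hcard, hEeq]
          constructor
          · intro h; exact ⟨hB, hNE, h⟩
          · rintro ⟨_, _, h⟩; exact h
        · constructor
          · intro h; exact absurd h hfin
          · rintro (h | ⟨_, hne⟩)
            · exact absurd h hU
            · exact absurd hne hNE
    · -- lopsided case : exactly one
      have hL : lopsidedSet (lspec (2 ^ e * m)) := ⟨hB, hU⟩
      have hCSne_emp : SpecAux.CS e m ≠ ∅ := by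
        intro h
        apply hU
        unfold unmixedSet
        rw [hevens, h]
        simp
      have hmix : 2 ^ (e + 1) < m := by
        by_contra hcon
        push_neg at hcon
        exact hCSne_emp ((SpecAux.CS_empty_iff hm0).mpr hcon)
      have hCSneS1 : SpecAux.CS e m ≠ SpecAux.S1 e m := fun h =>
        hB (hbal_iff.mpr (by rw [h]))
      have hD : (SpecAux.S1 e m \ SpecAux.CS e m).Nonempty := by
        obtain ⟨x, hx1, hx2⟩ :=
          Set.exists_of_ssubset (ssubset_of_subset_of_ne SpecAux.CS_subset_S1 hCSneS1)
        exact ⟨x, hx1, hx2⟩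
      have hclass : specClass (2 ^ e * m) = {2 ^ e * m} := by
        ext n'
        constructor
        · rintro ⟨hn', hspec⟩
          obtain ⟨e', m', hm', rfl⟩ := SpecAux.decomp hn'
          obtain ⟨hee, hS1, hCS⟩ := SpecAux.e_eq_of_spec_eq hm hm' hspec hmix
          have h1 := SpecAux.prod_of_diff hm' (show (SpecAux.S1 e m' \ SpecAux.CS e m').Nonempty
            by rw [hS1, hCS]; exact hD)
          have h2 := SpecAux.prod_of_diff hm hD
          rw [hS1, hCS] at h1
          have hmm : m' = m := by omega
          show 2 ^ e' * m' = 2 ^ e * m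
          rw [hee, hmm]
        · intro h
          have h1 : n' = 2 ^ e * m := h
          rw [h1]
          exact ⟨by positivity, rfl⟩
      refine ⟨Or.inl (by rw [hclass]; exact Set.encard_singleton _), ?_, ?_, ?_⟩
      · rw [hclass, Set.encard_singleton]
        exact ⟨fun _ => Or.inl hL, fun _ => rfl⟩
      · rw [hclass, Set.encard_singleton]
        constructor
        · intro h; exact absurd h SpecAux.one_ne_two'
        · rintro ⟨hbal, _, _⟩; exact absurd hbal hB
      · rw [hclass]
        constructor
        · intro h; exact absurd (Set.finite_singleton _) h
        · rintro (h | ⟨hbal, _⟩)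
          · exact absurd h hU
          · exact absurd hbal hB
end
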